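/- arXiv:2205.08972 — 11 statements merged into one kernel-verified Lean document; each statement's English description precedes it below -/
import Mathlib

section
/- Let σ : ZMod n → Bool be a configuration and σ' = maj_r(σ). If the pair of consecutive cells (i, i+1) is a switch point in σ' (i.e., σ'(i) ≠ σ'(i+1)), then σ(i−r) = σ'(i) and σ(i+1+r) = σ'(i+1). -/
open Finset

/-- Number of `true` cells in the radius-`r` neighborhood `[i-r, i+r]` of cell `i`. -/
def majCount (n r : ℕ) (σ : ZMod n → Bool) (i : ZMod n) : ℕ :=
  ((Finset.range (2 * r + 1)).filter (fun (t : ℕ) => σ (i - (r : ZMod n) + (t : ZMod n)) = true)).card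

/-- The majority rule with radius `r`. -/
def maj (n r : ℕ) (σ : ZMod n → Bool) : ZMod n → Bool :=
  fun i => decide (r + 1 ≤ majCount n r σ i)

/-- Number of cells with state `β` in the cyclic interval starting at `a` of length `L`. -/
def cnt (n : ℕ) (σ : ZMod n → Bool) (a : ZMod n) (L : ℕ) (β : Bool) : ℕ :=
  ((Finset.range L).filter (fun (t : ℕ) => σ (a + (t : ZMod n)) = β)).card

/-- `[a, a+L-1]` is a maximal homogeneous block of `σ`. -/
def IsBlock (n : ℕ) (σ : ZMod n → Bool) (a : ZMod n) (L : ℕ) : Prop :=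
  0 < L ∧ L ≤ n ∧ (∀ t : ℕ, t < L → σ (a + (t : ZMod n)) = σ a) ∧
    σ (a - 1) ≠ σ a ∧ σ (a + (L : ZMod n)) ≠ σ a

/-- Cell `c` lies in the cyclic interval starting at `a` of length `L`. -/
def InBlock (n : ℕ) (c a : ZMod n) (L : ℕ) : Prop :=
  ∃ t : ℕ, t < L ∧ c = a + (t : ZMod n)

/-- The Switch Point Argument: if `(i, i+1)` is a switch point of `σ' = maj_r σ`,
then `σ(i-r) = σ'(i)` and `σ(i+1+r) = σ'(i+1)`. -/
theorem switch_point_argument (n r : ℕ) (hr : 1 ≤ r)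
    (σ σ' : ZMod n → Bool) (h : maj n r σ = σ')
    (i : ZMod n) (hsw : σ' i ≠ σ' (i + 1)) :
    σ (i - (r : ZMod n)) = σ' i ∧ σ (i + 1 + (r : ZMod n)) = σ' (i + 1) := by
  subst h
  have e1 : ∀ t : ℕ, i - (r : ZMod n) + ((t + 1 : ℕ) : ZMod n)
      = i + 1 - (r : ZMod n) + (t : ZMod n) := by
    intro t; push_cast; ring
  have e0 : i - (r : ZMod n) + ((0 : ℕ) : ZMod n) = i - (r : ZMod n) := by
    push_cast; ring
  have e2 : i + 1 - (r : ZMod n) + ((2 * r : ℕ) : ZMod n) = i + 1 + (r : ZMod n) := by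
    push_cast; ring
  have ha : majCount n r σ i =
      (∑ t ∈ Finset.range (2 * r),
        if σ (i + 1 - (r : ZMod n) + (t : ZMod n)) = true then 1 else 0)
      + (if σ (i - (r : ZMod n)) = true then 1 else 0) := by
    unfold majCount
    rw [Finset.card_filter, Finset.sum_range_succ']
    simp only [e1, e0]
  have hb : majCount n r σ (i + 1) =
      (∑ t ∈ Finset.range (2 * r),
        if σ (i + 1 - (r : ZMod n) + (t : ZMod n)) = true then 1 else 0)
      + (if σ (i + 1 + (r : ZMod n)) = true then 1 else 0) := by
    unfold majCount
    rw [Finset.card_filter, Finset.sum_range_succ]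
    simp only [e2]
  cases h1 : σ (i - (r : ZMod n)) <;> cases h2 : σ (i + 1 + (r : ZMod n)) <;>
    simp [maj, ha, hb, h1, h2] at hsw ⊢ <;> omega
end

section
/- Let σ : ZMod n → Bool and σ' = maj_r(σ). If (i, i+1) is a switch point in σ', then the interval [i−r+1, i+r] of 2r cells is balanced in σ, i.e., the number of cells ℓ in [i−r+1, i+r] with σ(ℓ) = 0 equals the number with σ(ℓ) = 1 (both equal r). -/
open Finset

lemma cnt_sum (n : ℕ) (σ : ZMod n → Bool) (a : ZMod n) (L : ℕ) (β : Bool) :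
    cnt n σ a L β = ∑ t ∈ Finset.range L, (if σ (a + (t : ZMod n)) = β then 1 else 0) := by
  rw [cnt, Finset.card_filter]

lemma cnt_add (n : ℕ) (σ : ZMod n → Bool) (a : ZMod n) (L : ℕ) :
    cnt n σ a L false + cnt n σ a L true = L := by
  rw [cnt_sum, cnt_sum, ← Finset.sum_add_distrib]
  have : ∀ t ∈ Finset.range L, ((if σ (a + (t : ZMod n)) = false then 1 else 0)
      + (if σ (a + (t : ZMod n)) = true then 1 else 0)) = 1 :=
    fun t _ => by cases hb : σ (a + (t : ZMod n)) <;> simp [hb]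
  rw [Finset.sum_congr rfl this, Finset.sum_const, smul_eq_mul, mul_one, Finset.card_range]

lemma majCount_left (n r : ℕ) (σ : ZMod n → Bool) (i : ZMod n) :
    majCount n r σ i =
      (if σ (i - (r : ZMod n)) = true then 1 else 0) + cnt n σ (i - (r : ZMod n) + 1) (2 * r) true := by
  rw [majCount, Finset.card_filter, Finset.sum_range_succ', cnt_sum, Nat.add_comm]
  congr 1
  · simp
  · refine Finset.sum_congr rfl fun t _ => ?_
    have : i - (r : ZMod n) + ((t + 1 : ℕ) : ZMod n) = i - (r : ZMod n) + 1 + (t : ZMod n) := by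
      push_cast; ring
    rw [this]

lemma majCount_right (n r : ℕ) (σ : ZMod n → Bool) (i : ZMod n) :
    majCount n r σ (i + 1) =
      cnt n σ (i - (r : ZMod n) + 1) (2 * r) true +
        (if σ (i + (r : ZMod n) + 1) = true then 1 else 0) := by
  rw [majCount, Finset.card_filter, Finset.sum_range_succ, cnt_sum]
  congr 1
  · refine Finset.sum_congr rfl fun t _ => ?_
    have : i + 1 - (r : ZMod n) + (t : ZMod n) = i - (r : ZMod n) + 1 + (t : ZMod n) := by ring
    rw [this]
  · have : i + 1 - (r : ZMod n) + ((2 * r : ℕ) : ZMod n) = i + (r : ZMod n) + 1 := by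
      push_cast; ring
    rw [this]

/-- A switch point in `σ' = maj_r σ` forces the `2r`-cell interval
`[i-r+1, i+r]` to be balanced in `σ` (`r` zeros and `r` ones). -/
theorem switch_point_induces_balance (n r : ℕ) (hr : 1 ≤ r) (hn : 2 * r < n)
    (σ σ' : ZMod n → Bool) (h : maj n r σ = σ')
    (i : ZMod n) (hsw : σ' i ≠ σ' (i + 1)) :
    cnt n σ (i - (r : ZMod n) + 1) (2 * r) false = r ∧
      cnt n σ (i - (r : ZMod n) + 1) (2 * r) true = r := by
  subst h
  set K := cnt n σ (i - (r : ZMod n) + 1) (2 * r) true with hK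
  set a := (if σ (i - (r : ZMod n)) = true then 1 else 0) with ha
  set b := (if σ (i + (r : ZMod n) + 1) = true then 1 else 0) with hb
  have ha1 : a ≤ 1 := by rw [ha]; split <;> omega
  have hb1 : b ≤ 1 := by rw [hb]; split <;> omega
  have h1 : majCount n r σ i = a + K := majCount_left n r σ i
  have h2 : majCount n r σ (i + 1) = K + b := majCount_right n r σ i
  have hKr : K = r := by
    simp only [maj, h1, h2, ne_eq, decide_eq_decide] at hsw
    omega
  have := cnt_add n σ (i - (r : ZMod n) + 1) (2 * r)
  omega
end

section
/- Let σ : ZMod n → Bool, let [i,j] be a cyclic interval of cells on which σ is constant with value β, and suppose the length of [i,j] is at least r+1. Then for every t ≥ 0 and every cell ℓ ∈ [i,j], maj_r^t(σ)(ℓ) = β. -/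
open Finset

lemma maj_step (n r : ℕ) (σ : ZMod n → Bool) (a : ZMod n) (L : ℕ) (β : Bool)
    (hL : r + 1 ≤ L) (hconst : ∀ t : ℕ, t < L → σ (a + (t : ZMod n)) = β) :
    ∀ k : ℕ, k < L → maj n r σ (a + (k : ZMod n)) = β := by
  intro k hk
  set m1 := min k r with hm1
  set m2 := min (L - 1 - k) r with hm2
  have hsub : Finset.Icc (r - m1) (r + m2) ⊆
      (Finset.range (2 * r + 1)).filter
        (fun (t : ℕ) => σ ((a + (k : ZMod n)) - (r : ZMod n) + (t : ZMod n)) = β) := by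
    intro t ht
    rw [Finset.mem_Icc] at ht
    rw [Finset.mem_filter, Finset.mem_range]
    constructor
    · omega
    · have hrt : r ≤ k + t := by omega
      have hcast : (a + (k : ZMod n)) - (r : ZMod n) + (t : ZMod n)
          = a + ((k + t - r : ℕ) : ZMod n) := by
        rw [Nat.cast_sub hrt, Nat.cast_add]; ring
      rw [hcast]
      exact hconst _ (by omega)
  have hcard : r + 1 ≤ ((Finset.range (2 * r + 1)).filter
      (fun (t : ℕ) => σ ((a + (k : ZMod n)) - (r : ZMod n) + (t : ZMod n)) = β)).card := by
    calc r + 1 ≤ (Finset.Icc (r - m1) (r + m2)).card := by rw [Nat.card_Icc]; omega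
    _ ≤ _ := Finset.card_le_card hsub
  cases β with
  | true =>
    simp only [maj, decide_eq_true_eq]
    exact hcard
  | false =>
    have htot : (majCount n r σ (a + (k : ZMod n)))
        + ((Finset.range (2 * r + 1)).filter
          (fun (t : ℕ) => σ ((a + (k : ZMod n)) - (r : ZMod n) + (t : ZMod n)) = false)).card
        = 2 * r + 1 := by
      have h := Finset.card_filter_add_card_filter_not
        (s := Finset.range (2 * r + 1))
        (p := fun (t : ℕ) => σ ((a + (k : ZMod n)) - (r : ZMod n) + (t : ZMod n)) = true)
      rw [Finset.card_range] at h
      have heq : (Finset.range (2 * r + 1)).filter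
          (fun (t : ℕ) => ¬ σ ((a + (k : ZMod n)) - (r : ZMod n) + (t : ZMod n)) = true)
          = (Finset.range (2 * r + 1)).filter
          (fun (t : ℕ) => σ ((a + (k : ZMod n)) - (r : ZMod n) + (t : ZMod n)) = false) := by
        apply Finset.filter_congr; intro x _; simp
      rw [heq] at h
      exact h
    simp only [maj, decide_eq_false_iff_not]
    omega

/-- Cells of a homogeneous interval of length at least `r+1` keep their state forever. -/
theorem long_homogeneous_interval_is_stable (n r : ℕ) (hr : 1 ≤ r)
    (σ : ZMod n → Bool) (a : ZMod n) (L : ℕ) (β : Bool)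
    (hL : r + 1 ≤ L) (hconst : ∀ t : ℕ, t < L → σ (a + (t : ZMod n)) = β) :
    ∀ t : ℕ, ∀ k : ℕ, k < L → (maj n r)^[t] σ (a + (k : ZMod n)) = β := by
  intro t
  induction t generalizing σ with
  | zero => simpa using hconst
  | succ t ih =>
    intro k hk
    rw [Function.iterate_succ_apply]
    exact ih (maj n r σ) (maj_step n r σ a L β hL hconst) k hk
end

section
/- Let σ : ZMod n → Bool be a configuration such that maj_r^2(σ) = σ (temporally periodic). Then either every maximal homogeneous block of σ has length at most r, or every maximal homogeneous block of σ has length at least r+1. -/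
open Finset

/-- `i` lies in a constant run of length `r+1`. -/
def Erun (n r : ℕ) (σ : ZMod n → Bool) (i : ZMod n) : Prop :=
  ∃ t, t ≤ r ∧ ∀ s, s ≤ r → σ (i - (t : ZMod n) + (s : ZMod n)) = σ i

lemma maj_eq_of_subset (n r : ℕ) (σ : ZMod n → Bool) (i : ZMod n) (b : Bool)
    (T : Finset ℕ) (hT : T ⊆ Finset.range (2 * r + 1)) (hcard : r + 1 ≤ T.card)
    (hb : ∀ u ∈ T, σ (i - (r : ZMod n) + (u : ZMod n)) = b) :
    maj n r σ i = b := by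
  unfold maj majCount
  cases b with
  | true =>
    have hsub : T ⊆ (Finset.range (2*r+1)).filter
        (fun (t : ℕ) => σ (i - (r:ZMod n) + (t:ZMod n)) = true) := by
      intro u hu
      simp only [Finset.mem_filter]
      exact ⟨hT hu, hb u hu⟩
    have hc := Finset.card_le_card hsub
    exact decide_eq_true (le_trans hcard hc)
  | false =>
    have hsub : (Finset.range (2*r+1)).filter
        (fun (t : ℕ) => σ (i - (r:ZMod n) + (t:ZMod n)) = true) ⊆ Finset.range (2*r+1) \ T := by
      intro u hu
      simp only [Finset.mem_filter] at hu
      simp only [Finset.mem_sdiff]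
      refine ⟨hu.1, fun hmem => ?_⟩
      have hfalse := hb u hmem
      rw [hu.2] at hfalse
      simp at hfalse
    have h1 := Finset.card_le_card hsub
    have h2 : (Finset.range (2*r+1) \ T).card = (2*r+1) - T.card := by
      rw [Finset.card_sdiff_of_subset hT, Finset.card_range]
    apply decide_eq_false
    omega

lemma maj_eq_self_of_erun {n r : ℕ} {σ : ZMod n → Bool} {i : ZMod n}
    (hE : Erun n r σ i) : maj n r σ i = σ i := by
  obtain ⟨t, ht, hrun⟩ := hE
  apply maj_eq_of_subset n r σ i (σ i) ((Finset.range (r+1)).image (fun s => r - t + s))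
  · intro u hu
    simp only [Finset.mem_image, Finset.mem_range] at hu
    obtain ⟨s, hs, rfl⟩ := hu
    simp only [Finset.mem_range]
    omega
  · have hinj : Function.Injective (fun s => r - t + s) := fun x y hxy => by
      simpa using hxy
    rw [Finset.card_image_of_injective _ hinj, Finset.card_range]
  · intro u hu
    simp only [Finset.mem_image, Finset.mem_range] at hu
    obtain ⟨s, hs, rfl⟩ := hu
    have e : (((r - t + s : ℕ)) : ZMod n) = (r : ZMod n) - t + s := by
      rw [Nat.cast_add, Nat.cast_sub ht]
    rw [e, show i - (r:ZMod n) + ((r:ZMod n) - t + s) = i - t + s from by ring]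
    exact hrun s (by omega)

lemma erun_shift {n r : ℕ} {σ : ZMod n → Bool} {j : ZMod n} {v : Bool}
    (hv : ∀ s, s ≤ r → σ (j + (s : ZMod n)) = v) (s : ℕ) (hs : s ≤ r) :
    Erun n r σ (j + (s : ZMod n)) := by
  refine ⟨s, hs, fun s' hs' => ?_⟩
  rw [show j + (s:ZMod n) - s + s' = j + s' from by ring, hv s' hs', hv s hs]

lemma maj_run {n r : ℕ} {σ : ZMod n → Bool} {j : ZMod n} {v : Bool}
    (hv : ∀ s, s ≤ r → σ (j + (s : ZMod n)) = v) (s : ℕ) (hs : s ≤ r) :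
    maj n r σ (j + (s : ZMod n)) = v := by
  rw [maj_eq_self_of_erun (erun_shift hv s hs), hv s hs]

lemma erun_pullback {n r : ℕ} {τ σ : ZMod n → Bool} {a : ZMod n}
    (hmaj : maj n r τ = σ) (hE : Erun n r τ a) : Erun n r σ a := by
  obtain ⟨t, ht, hrun⟩ := hE
  have hm : ∀ s, s ≤ r → maj n r τ (a - (t:ZMod n) + (s:ZMod n)) = τ a :=
    fun s hs => maj_run hrun s hs
  have h2 : σ a = τ a := by
    have := hm t ht
    rw [show a - (t:ZMod n) + (t:ZMod n) = a from by ring, hmaj] at this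
    exact this
  refine ⟨t, ht, fun s hs => ?_⟩
  have h1 := hm s hs
  rw [hmaj] at h1
  rw [h1, h2]

lemma not_erun_short {n r : ℕ} {σ : ZMod n → Bool} {a : ZMod n} {L : ℕ}
    (hB : IsBlock n σ a L) (hL : L ≤ r) : ¬ Erun n r σ a := by
  rintro ⟨t, ht, hrun⟩
  obtain ⟨hL0, hLn, hconst, hleft, hright⟩ := hB
  rcases Nat.eq_zero_or_pos t with rfl | htpos
  · apply hright
    have := hrun L hL
    simpa using this
  · apply hleft
    have := hrun (t - 1) (by omega)
    have e : a - (t:ZMod n) + ((t - 1 : ℕ) : ZMod n) = a - 1 := by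
      rw [Nat.cast_sub htpos]
      push_cast
      ring
    rwa [e] at this

lemma erun_long {n r : ℕ} {σ : ZMod n → Bool} {a : ZMod n} {L : ℕ}
    (hB : IsBlock n σ a L) (hL : r + 1 ≤ L) : Erun n r σ a := by
  refine ⟨0, Nat.zero_le _, fun s hs => ?_⟩
  have := hB.2.2.1 s (by omega)
  simpa using this

/-- In a temporally periodic configuration, either all maximal homogeneous blocks are short
(length at most `r`) or all are long (length at least `r+1`). -/
theorem temporally_periodic_blocks_dichotomy (n r : ℕ) (hr : 1 ≤ r)
    (σ : ZMod n → Bool) (h : (maj n r)^[2] σ = σ) :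
    (∀ (a : ZMod n) (L : ℕ), IsBlock n σ a L → L ≤ r) ∨
      (∀ (a : ZMod n) (L : ℕ), IsBlock n σ a L → r + 1 ≤ L) := by
  by_contra hc
  push_neg at hc
  obtain ⟨⟨a1, L1, hB1, hL1⟩, ⟨a0, L0, hB0, hL0⟩⟩ := hc
  have hnz : NeZero n := ⟨by have h1 := hB0.2.1; have h2 := hB0.1; omega⟩
  have hE1 : Erun n r σ a1 := erun_long hB1 (by omega)
  have hE0 : ¬ Erun n r σ a0 := not_erun_short hB0 (by omega)
  have hmm : maj n r (maj n r σ) = σ := by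
    rwa [Function.iterate_succ, Function.iterate_one, Function.comp_apply] at h
  -- find a boundary
  have hbound : ∃ j, Erun n r σ j ∧ ¬ Erun n r σ (j + 1) := by
    by_contra hb
    push_neg at hb
    have hall : ∀ m : ℕ, Erun n r σ (a1 + (m : ZMod n)) := by
      intro m
      induction m with
      | zero => simpa using hE1
      | succ k ih =>
        have := hb _ ih
        rwa [show a1 + ((k+1 : ℕ) : ZMod n) = a1 + (k:ZMod n) + 1 from by push_cast; ring]
    apply hE0
    have := hall (a0 - a1).val
    rwa [ZMod.natCast_val, ZMod.cast_id, add_sub_cancel] at this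
  obtain ⟨j, hEj, hnEj⟩ := hbound
  obtain ⟨t, ht, hrun⟩ := hEj
  -- t must be r
  have htr : t = r := by
    by_contra hne
    apply hnEj
    refine ⟨t + 1, by omega, fun s hs => ?_⟩
    rw [show j + 1 - ((t+1 : ℕ):ZMod n) + (s:ZMod n) = j - t + s from by push_cast; ring,
      hrun s hs]
    have := hrun (t+1) (by omega)
    rw [show j - (t:ZMod n) + ((t+1:ℕ):ZMod n) = j + 1 from by push_cast; ring] at this
    rw [this]
  replace hrun : ∀ s, s ≤ r → σ (j - (r:ZMod n) + (s:ZMod n)) = σ j := by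
    intro s hs
    rw [← htr]
    exact hrun s hs
  -- σ (j+1) = ! σ j
  have hav : σ (j + 1) = ! σ j := by
    by_contra hne
    have hav' : σ (j + 1) = σ j := by
      cases h1 : σ (j+1) <;> cases h2 : σ j <;> simp_all
    apply hnEj
    refine ⟨r, le_refl r, fun s hs => ?_⟩
    rcases Nat.lt_or_ge s r with hsr | hsr
    · rw [show j + 1 - (r:ZMod n) + (s:ZMod n) = j - r + ((s+1:ℕ):ZMod n) from by
        push_cast; ring, hrun (s+1) (by omega), hav']
    · have hsr' : s = r := by omega
      rw [hsr']
      rw [show j + 1 - (r:ZMod n) + (r:ZMod n) = j + 1 from by ring]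
  -- minimal such m, and m ≤ r
  have hexr : ∃ m : ℕ, m ≤ r ∧ σ (j + 1 + (m : ZMod n)) = σ j := by
    by_contra hb
    push_neg at hb
    apply hnEj
    refine ⟨0, Nat.zero_le _, fun s hs => ?_⟩
    have h1 : σ (j + 1 + (s:ZMod n)) = ! σ j := by
      have := hb s hs
      cases h2 : σ (j + 1 + (s:ZMod n)) <;> cases h3 : σ j <;> simp_all
    rw [show j + 1 - ((0:ℕ):ZMod n) + (s:ZMod n) = j + 1 + s from by push_cast; ring,
      h1, hav]
  obtain ⟨m0, hm0r, hm0⟩ := hexr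
  have hex' : ∃ m : ℕ, σ (j + 1 + (m : ZMod n)) = σ j := ⟨m0, hm0⟩
  set m := Nat.find hex' with hm
  have hmspec : σ (j + 1 + (m:ZMod n)) = σ j := Nat.find_spec hex'
  have hmler : m ≤ r := le_trans (Nat.find_min' hex' hm0) hm0r
  have hm1 : 1 ≤ m := by
    rcases Nat.eq_zero_or_pos m with h0 | h1
    · exfalso
      rw [h0] at hmspec
      simp only [Nat.cast_zero, add_zero] at hmspec
      rw [hav] at hmspec
      exact (Bool.not_ne_self (σ j)) hmspec
    · exact h1
  -- the eating step: maj σ (j+1) = σ j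
  have hτa : maj n r σ (j + 1) = σ j := by
    apply maj_eq_of_subset n r σ (j+1) (σ j) (insert (r + m) (Finset.range r))
    · intro u hu
      simp only [Finset.mem_insert, Finset.mem_range] at hu
      simp only [Finset.mem_range]
      omega
    · rw [Finset.card_insert_of_notMem (by simp), Finset.card_range]
    · intro u hu
      simp only [Finset.mem_insert, Finset.mem_range] at hu
      rcases hu with rfl | hur
      · rw [show j + 1 - (r:ZMod n) + ((r+m:ℕ):ZMod n) = j + 1 + m from by push_cast; ring]
        exact hmspec
      · rw [show j + 1 - (r:ZMod n) + (u:ZMod n) = j - r + ((u+1:ℕ):ZMod n) from by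
          push_cast; ring]
        exact hrun (u+1) (by omega)
  -- maj σ is constant σ j on [j-r, j+1], so Erun (maj σ) (j+1)
  have hEτ : Erun n r (maj n r σ) (j + 1) := by
    refine ⟨r, le_refl r, fun s hs => ?_⟩
    rw [hτa]
    rcases Nat.lt_or_ge s r with hsr | hsr
    · rw [show j + 1 - (r:ZMod n) + (s:ZMod n) = (j - r) + ((s+1:ℕ):ZMod n) from by
        push_cast; ring]
      exact maj_run hrun (s+1) (by omega)
    · have hsr' : s = r := by omega
      rw [hsr']
      rw [show j + 1 - (r:ZMod n) + (r:ZMod n) = j + 1 from by ring, hτa]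
  exact hnEj (erun_pullback hmm hEτ)
end

section
/- Let σ, σ' : ZMod n → Bool satisfy maj_r(σ) = σ' and maj_r(σ') = σ (a temporally periodic pair). Then for every maximal homogeneous block [i,j] of σ', each of the cyclic intervals [i−r−1, j−r] and [i+r, j+r+1] contains exactly one switch point of σ. -/
open Finset

lemma majCount_step (n r : ℕ) (σ : ZMod n → Bool) (i : ZMod n) :
    majCount n r σ i + (if σ (i + (r : ZMod n) + 1) = true then 1 else 0) =
    majCount n r σ (i + 1) + (if σ (i - (r : ZMod n)) = true then 1 else 0) := by
  unfold majCount
  rw [Finset.card_filter, Finset.card_filter]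
  have e1 : (∑ t ∈ Finset.range (2*r+2), (if σ (i - (r:ZMod n) + (t:ZMod n)) = true then 1 else 0))
      = (∑ t ∈ Finset.range (2*r+1), (if σ (i - (r:ZMod n) + (t:ZMod n)) = true then 1 else 0))
        + (if σ (i - (r:ZMod n) + ((2*r+1 : ℕ):ZMod n)) = true then 1 else 0) :=
    Finset.sum_range_succ _ _
  have e2 : (∑ t ∈ Finset.range (2*r+2), (if σ (i - (r:ZMod n) + (t:ZMod n)) = true then 1 else 0))
      = (∑ t ∈ Finset.range (2*r+1), (if σ (i - (r:ZMod n) + ((t+1 : ℕ):ZMod n)) = true then 1 else 0))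
        + (if σ (i - (r:ZMod n) + ((0 : ℕ):ZMod n)) = true then 1 else 0) :=
    Finset.sum_range_succ' _ _
  have k1 : i - (r:ZMod n) + ((2*r+1 : ℕ):ZMod n) = i + (r:ZMod n) + 1 := by
    push_cast; ring
  have k2 : ∀ t : ℕ, i - (r:ZMod n) + ((t+1 : ℕ):ZMod n) = (i + 1) - (r:ZMod n) + (t:ZMod n) := by
    intro t; push_cast; ring
  have k3 : i - (r:ZMod n) + ((0 : ℕ):ZMod n) = i - (r:ZMod n) := by
    push_cast; ring
  rw [k1] at e1
  simp only [k2, k3] at e2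
  omega

lemma maj_cross (n r : ℕ) (σ τ : ZMod n → Bool) (h : maj n r σ = τ) (ℓ : ZMod n)
    (hne : τ ℓ ≠ τ (ℓ + 1)) :
    σ (ℓ + (r : ZMod n) + 1) = τ (ℓ + 1) ∧ σ (ℓ - (r : ZMod n)) = τ ℓ := by
  have hstep := majCount_step n r σ ℓ
  have hτ0 : (τ ℓ = true) ↔ r + 1 ≤ majCount n r σ ℓ := by
    rw [← h]; simp [maj]
  have hτ1 : (τ (ℓ + 1) = true) ↔ r + 1 ≤ majCount n r σ (ℓ + 1) := by
    rw [← h]; simp [maj]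
  rcases Bool.eq_false_or_eq_true (τ ℓ) with h0 | h0 <;>
    rcases Bool.eq_false_or_eq_true (τ (ℓ + 1)) with h1 | h1
  · exact absurd (h0.trans h1.symm) hne
  · rw [h0, h1]
    have hx : r + 1 ≤ majCount n r σ ℓ := hτ0.mp h0
    have hy : majCount n r σ (ℓ + 1) ≤ r := by
      by_contra hy; rw [h1] at hτ1; simp at hτ1; omega
    cases hb : σ (ℓ + (r : ZMod n) + 1) <;> cases hc : σ (ℓ - (r : ZMod n)) <;>
      simp [hb, hc] at hstep ⊢ <;> omega
  · rw [h0, h1]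
    have hx : majCount n r σ ℓ ≤ r := by
      by_contra hx; rw [h0] at hτ0; simp at hτ0; omega
    have hy : r + 1 ≤ majCount n r σ (ℓ + 1) := hτ1.mp h1
    cases hb : σ (ℓ + (r : ZMod n) + 1) <;> cases hc : σ (ℓ - (r : ZMod n)) <;>
      simp [hb, hc] at hstep ⊢ <;> omega
  · exact absurd (h0.trans h1.symm) hne

lemma one_crossing (L : ℕ) (b : Bool) (h : ℕ → Bool) (h0 : h 0 = !b) (hL : h L = b)
    (hup : ∀ t, t < L → h t ≠ h (t + 1) → h (t + 1) = b) :
    ((Finset.range L).filter (fun t => h t ≠ h (t + 1))).card = 1 := by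
  have hL0 : 0 < L := by
    rcases Nat.eq_zero_or_pos L with h' | h'
    · rw [h'] at hL; rw [hL] at h0; cases b <;> simp at h0
    · exact h'
  have mono : ∀ t, t < L → h t = b → h (t + 1) = b := by
    intro t ht htb
    by_cases he : h t = h (t + 1)
    · rw [← he]; exact htb
    · exact hup t ht he
  have mono' : ∀ t, t ≤ L → ∀ s, s ≤ t → h s = b → h t = b := by
    intro t
    induction t with
    | zero => intro _ s hs hsb; rw [Nat.le_zero.mp hs] at hsb; exact hsb
    | succ k ih =>
      intro hkL s hs hsb
      rcases Nat.lt_or_ge s (k+1) with h' | h'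
      · exact mono k (by omega) (ih (by omega) s (by omega) hsb)
      · have : s = k + 1 := by omega
        rw [← this]; exact hsb
  have hex : ∃ t, h (t + 1) = b := by
    refine ⟨L - 1, ?_⟩
    rw [Nat.sub_add_cancel hL0]; exact hL
  set t0 := Nat.find hex with ht0def
  have ht0 : h (t0 + 1) = b := Nat.find_spec hex
  have ht0L : t0 ≤ L - 1 := Nat.find_le (by rw [Nat.sub_add_cancel hL0]; exact hL)
  have ht0notb : h t0 ≠ b := by
    rcases Nat.eq_zero_or_pos t0 with h' | h'
    · rw [h', h0]; cases b <;> simp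
    · have := Nat.find_min hex (m := t0 - 1) (by omega)
      rw [Nat.sub_add_cancel h'] at this
      exact this
  have ht0lt : t0 < L := by omega
  have : (Finset.range L).filter (fun t => h t ≠ h (t + 1)) = {t0} := by
    ext t
    simp only [Finset.mem_filter, Finset.mem_range, Finset.mem_singleton]
    constructor
    · rintro ⟨htL, hsw⟩
      have hb1 : h (t + 1) = b := hup t htL hsw
      have hge : t0 ≤ t := Nat.find_le hb1
      have hnb : h t ≠ b := fun hh => hsw (hh.trans hb1.symm)
      by_contra hne
      have : t0 + 1 ≤ t := by omega
      exact hnb (mono' t (by omega) (t0 + 1) this ht0)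
    · rintro rfl
      refine ⟨ht0lt, ?_⟩
      rw [ht0]; exact ht0notb
  rw [this, Finset.card_singleton]

lemma bool_ne_iff {x y : Bool} (h : x ≠ y) : x = !y := by
  cases x <;> cases y <;> simp_all

/-- For a temporally periodic pair `σ, σ'` and a maximal homogeneous block `[i, j] = [a, a+L-1]`
of `σ'`, each of the intervals `[i-r-1, j-r]` and `[i+r, j+r+1]` contains exactly one
switch point of `σ`. -/
theorem single_switch_point_at_block_edges (n r : ℕ) (hr : 1 ≤ r)
    (σ σ' : ZMod n → Bool) (h1 : maj n r σ = σ') (h2 : maj n r σ' = σ)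
    (a : ZMod n) (L : ℕ) (hblk : IsBlock n σ' a L) :
    ((Finset.range L).filter
        (fun (t : ℕ) => σ (a - (r : ZMod n) - 1 + (t : ZMod n)) ≠
                  σ (a - (r : ZMod n) - 1 + (t : ZMod n) + 1))).card = 1 ∧
    ((Finset.range L).filter
        (fun (t : ℕ) => σ (a + (r : ZMod n) + (t : ZMod n)) ≠
                  σ (a + (r : ZMod n) + (t : ZMod n) + 1))).card = 1 := by
  obtain ⟨hL0, hLn, hconst, hleft, hright⟩ := hblk
  -- left block edge
  have hleftne : σ' (a - 1) ≠ σ' ((a - 1) + 1) := by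
    have e : (a : ZMod n) - 1 + 1 = a := by ring
    rw [e]; exact hleft
  have hcl := maj_cross n r σ σ' h1 (a - 1) hleftne
  have hσ1 : σ (a + (r : ZMod n)) = σ' a := by
    have e1 : a - 1 + (r : ZMod n) + 1 = a + (r : ZMod n) := by ring
    have e2 : (a : ZMod n) - 1 + 1 = a := by ring
    rw [e1, e2] at hcl; exact hcl.1
  have hσ0 : σ (a - (r : ZMod n) - 1) = !(σ' a) := by
    have e : a - 1 - (r : ZMod n) = a - (r : ZMod n) - 1 := by ring
    rw [e] at hcl
    rw [hcl.2]; exact bool_ne_iff hleft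
  -- right block edge
  have hcLcast : ((L - 1 : ℕ) : ZMod n) = (L : ZMod n) - 1 := by
    have h' : ((L - 1 + 1 : ℕ) : ZMod n) = (L : ZMod n) := by
      rw [Nat.sub_add_cancel hL0]
    rw [Nat.cast_add, Nat.cast_one] at h'
    rw [← h']; ring
  have hblockend : σ' (a + ((L - 1 : ℕ) : ZMod n)) = σ' a := hconst (L - 1) (by omega)
  have hrightne : σ' (a + ((L - 1 : ℕ) : ZMod n)) ≠ σ' ((a + ((L - 1 : ℕ) : ZMod n)) + 1) := by
    have e : (a + ((L - 1 : ℕ) : ZMod n)) + 1 = a + (L : ZMod n) := by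
      rw [hcLcast]; ring
    rw [e, hblockend]
    exact fun hh => hright hh.symm
  have hcr := maj_cross n r σ σ' h1 (a + ((L - 1 : ℕ) : ZMod n)) hrightne
  have hσ2 : σ (a + (L : ZMod n) + (r : ZMod n)) = !(σ' a) := by
    have e1 : a + ((L - 1 : ℕ) : ZMod n) + (r : ZMod n) + 1 = a + (L : ZMod n) + (r : ZMod n) := by
      rw [hcLcast]; ring
    have e2 : (a + ((L - 1 : ℕ) : ZMod n)) + 1 = a + (L : ZMod n) := by
      rw [hcLcast]; ring
    rw [e1, e2] at hcr
    rw [hcr.1]; exact bool_ne_iff hright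
  have hσ3 : σ (a - (r : ZMod n) - 1 + (L : ZMod n)) = σ' a := by
    have e : a + ((L - 1 : ℕ) : ZMod n) - (r : ZMod n) = a - (r : ZMod n) - 1 + (L : ZMod n) := by
      rw [hcLcast]; ring
    rw [e] at hcr
    rw [hcr.2]; exact hblockend
  constructor
  · -- left interval
    have key := one_crossing L (σ' a) (fun t => σ (a - (r : ZMod n) - 1 + (t : ℕ))) ?_ ?_ ?_
    · rw [← key]
      congr 1
      apply Finset.filter_congr
      intro t _
      simp only [Nat.cast_add, Nat.cast_one, ← add_assoc]
    · simpa using hσ0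
    · exact hσ3
    · intro t ht hsw
      simp only [Nat.cast_add, Nat.cast_one, ← add_assoc] at hsw ⊢
      have hcc := maj_cross n r σ' σ h2 (a - (r : ZMod n) - 1 + (t : ZMod n)) hsw
      have e : a - (r : ZMod n) - 1 + (t : ZMod n) + (r : ZMod n) + 1 = a + (t : ZMod n) := by ring
      rw [e] at hcc
      rw [← hcc.1]; exact hconst t ht
  · -- right interval
    have key := one_crossing L (!(σ' a)) (fun t => σ (a + (r : ZMod n) + (t : ℕ))) ?_ ?_ ?_
    · rw [← key]
      congr 1
      apply Finset.filter_congr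
      intro t _
      simp only [Nat.cast_add, Nat.cast_one, ← add_assoc]
    · simp only [Bool.not_not]; simpa using hσ1
    · have e : a + (r : ZMod n) + (L : ZMod n) = a + (L : ZMod n) + (r : ZMod n) := by ring
      simpa [e] using hσ2
    · intro t ht hsw
      simp only [Nat.cast_add, Nat.cast_one, ← add_assoc] at hsw ⊢
      have hcc := maj_cross n r σ' σ h2 (a + (r : ZMod n) + (t : ZMod n)) hsw
      have e : a + (r : ZMod n) + (t : ZMod n) - (r : ZMod n) = a + (t : ZMod n) := by ring
      rw [e] at hcc
      have hℓ : σ (a + (r : ZMod n) + (t : ZMod n)) = σ' a := by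
        rw [← hcc.2]; exact hconst t ht
      rw [← hℓ]
      exact bool_ne_iff (Ne.symm hsw)
end

section
/- For every pair of configurations σ, σ' : ZMod n → Bool with maj_r(σ) = σ', the map sending each maximal homogeneous block [i,j] of σ' to the maximal homogeneous block of σ containing the cell i+r is injective. The same holds for the map sending [i,j] to the block of σ containing j−r. -/
open Finset

lemma majCount_eq_sum (n r : ℕ) (σ : ZMod n → Bool) (i : ZMod n) :
    majCount n r σ i
      = ∑ t ∈ Finset.range (2 * r + 1),
          (if σ (i - (r : ZMod n) + (t : ZMod n)) = true then 1 else 0) := by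
  rw [majCount, Finset.card_filter]

lemma slide (n r : ℕ) (σ : ZMod n → Bool) (i : ZMod n) :
    majCount n r σ i + (if σ (i - (r : ZMod n) - 1) = true then 1 else 0)
      = majCount n r σ (i - 1) + (if σ (i + (r : ZMod n)) = true then 1 else 0) := by
  have A : majCount n r σ i
      = (∑ t ∈ Finset.range (2 * r),
          (if σ (i - (r : ZMod n) + (t : ZMod n)) = true then 1 else 0))
        + (if σ (i + (r : ZMod n)) = true then 1 else 0) := by
    rw [majCount_eq_sum, Finset.sum_range_succ]
    congr 2
    push_cast
    ring
  have B : majCount n r σ (i - 1)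
      = (∑ t ∈ Finset.range (2 * r),
          (if σ (i - (r : ZMod n) + (t : ZMod n)) = true then 1 else 0))
        + (if σ (i - (r : ZMod n) - 1) = true then 1 else 0) := by
    rw [majCount_eq_sum, Finset.sum_range_succ']
    congr 1
    · apply Finset.sum_congr rfl
      intro t _
      congr 2
      push_cast
      ring
    · congr 2
      push_cast
      ring
  omega

lemma changeLemma (n r : ℕ) (σ : ZMod n → Bool) (i : ZMod n)
    (hne : maj n r σ (i - 1) ≠ maj n r σ i) :
    σ (i + (r : ZMod n)) = maj n r σ i ∧
      σ (i - (r : ZMod n) - 1) = maj n r σ (i - 1) := by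
  have hs := slide n r σ i
  simp only [maj] at hne ⊢
  rcases le_or_gt (r + 1) (majCount n r σ i) with h2 | h2 <;>
    rcases le_or_gt (r + 1) (majCount n r σ (i - 1)) with h1 | h1 <;>
      cases hb : σ (i + (r : ZMod n)) <;> cases hc : σ (i - (r : ZMod n) - 1) <;>
        simp_all <;> omega

lemma same_start_aux (n : ℕ) (τ : ZMod n → Bool) (a : ZMod n) (L₁ L₂ : ℕ)
    (h₁ : IsBlock n τ a L₁) (h₂ : IsBlock n τ a L₂) (hle : L₁ ≤ L₂) : L₁ = L₂ := by
  rcases lt_or_eq_of_le hle with hlt | he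
  · exact absurd (h₂.2.2.1 L₁ hlt) h₁.2.2.2.2
  · exact he

lemma same_start (n : ℕ) (τ : ZMod n → Bool) (a : ZMod n) (L₁ L₂ : ℕ)
    (h₁ : IsBlock n τ a L₁) (h₂ : IsBlock n τ a L₂) : L₁ = L₂ := by
  rcases le_total L₁ L₂ with hle | hle
  · exact same_start_aux n τ a L₁ L₂ h₁ h₂ hle
  · exact (same_start_aux n τ a L₂ L₁ h₂ h₁ hle).symm

lemma same_end_aux (n : ℕ) (τ : ZMod n → Bool) (a₁ : ZMod n) (L₁ : ℕ) (a₂ : ZMod n) (L₂ : ℕ)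
    (h₁ : IsBlock n τ a₁ L₁) (h₂ : IsBlock n τ a₂ L₂)
    (he : a₁ + (L₁ : ZMod n) = a₂ + (L₂ : ZMod n)) (hle : L₁ ≤ L₂) : a₁ = a₂ := by
  rcases lt_or_eq_of_le hle with hlt | heq
  · exfalso
    have ha : a₁ = a₂ + ((L₂ - L₁ : ℕ) : ZMod n) := by
      have hc : ((L₂ - L₁ : ℕ) : ZMod n) = (L₂ : ZMod n) - (L₁ : ZMod n) := Nat.cast_sub hle
      rw [hc]
      linear_combination he
    have h1 : τ a₁ = τ a₂ := by
      have hL := h₁.1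
      rw [ha]; exact h₂.2.2.1 _ (by omega)
    have h2 : τ (a₁ - 1) = τ a₂ := by
      have ha' : a₁ - 1 = a₂ + ((L₂ - L₁ - 1 : ℕ) : ZMod n) := by
        rw [ha]
        have : (L₂ - L₁ : ℕ) = (L₂ - L₁ - 1) + 1 := by omega
        rw [this]
        push_cast
        ring
      rw [ha']; exact h₂.2.2.1 _ (by omega)
    exact h₁.2.2.2.1 (h1 ▸ h2 ▸ rfl)
  · have : a₁ + (L₁ : ZMod n) = a₂ + (L₁ : ZMod n) := by rw [heq] at he ⊢; exact he
    exact add_right_cancel this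

lemma same_end (n : ℕ) (τ : ZMod n → Bool) (a₁ : ZMod n) (L₁ : ℕ) (a₂ : ZMod n) (L₂ : ℕ)
    (h₁ : IsBlock n τ a₁ L₁) (h₂ : IsBlock n τ a₂ L₂)
    (he : a₁ + (L₁ : ZMod n) = a₂ + (L₂ : ZMod n)) : a₁ = a₂ := by
  rcases le_total L₁ L₂ with hle | hle
  · exact same_end_aux n τ a₁ L₁ a₂ L₂ h₁ h₂ he hle
  · exact (same_end_aux n τ a₂ L₂ a₁ L₁ h₂ h₁ he.symm hle).symm

lemma right_core (n r : ℕ) (σ : ZMod n → Bool) (a₁ : ZMod n) (L₁ : ℕ) (a₂ : ZMod n) (L₂ : ℕ)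
    (s : ZMod n) (M : ℕ)
    (hb₁ : IsBlock n (maj n r σ) a₁ L₁) (hb₂ : IsBlock n (maj n r σ) a₂ L₂)
    (hs : IsBlock n σ s M) (t₁ t₂ : ℕ) (ht₁ : t₁ < M) (ht₂ : t₂ < M)
    (he₁ : a₁ + (r : ZMod n) = s + (t₁ : ZMod n)) (he₂ : a₂ + (r : ZMod n) = s + (t₂ : ZMod n))
    (hle : t₁ ≤ t₂) : a₁ = a₂ := by
  set τ := maj n r σ with hτ
  have hom := hs.2.2.1
  have hA₁ : σ (a₁ + (r : ZMod n)) = τ a₁ := (changeLemma n r σ a₁ hb₁.2.2.2.1).1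
  have hA₂ : σ (a₂ + (r : ZMod n)) = τ a₂ := (changeLemma n r σ a₂ hb₂.2.2.2.1).1
  have hv₁ : τ a₁ = σ s := by rw [← hA₁, he₁]; exact hom t₁ ht₁
  have hv₂ : τ a₂ = σ s := by rw [← hA₂, he₂]; exact hom t₂ ht₂
  rcases eq_or_lt_of_le hle with heq | hlt
  · subst heq
    have : a₁ + (r : ZMod n) = a₂ + (r : ZMod n) := he₁.trans he₂.symm
    exact add_right_cancel this
  exfalso
  set d := t₂ - t₁ with hd
  have hd1 : 1 ≤ d := by omega
  have ha₂ : a₂ = a₁ + (d : ZMod n) := by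
    have hc : (t₂ : ZMod n) = (t₁ : ZMod n) + (d : ZMod n) := by
      have : t₂ = t₁ + d := by omega
      rw [this]; push_cast; ring
    have : a₂ + (r : ZMod n) = (a₁ + (d : ZMod n)) + (r : ZMod n) := by
      linear_combination he₂ - he₁ + hc
    exact add_right_cancel this
  have H1 : ∀ k : ℕ, k ≤ d → σ (a₁ + (r : ZMod n) + (k : ZMod n)) = σ s := by
    intro k hk
    have : a₁ + (r : ZMod n) + (k : ZMod n) = s + ((t₁ + k : ℕ) : ZMod n) := by
      rw [he₁]; push_cast; ring
    rw [this]; exact hom _ (by omega)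
  have hA2' : τ (a₂ - 1) ≠ τ a₂ := hb₂.2.2.2.1
  have h1 : a₂ - 1 = a₁ + ((d - 1 : ℕ) : ZMod n) := by
    rw [ha₂]
    have : d = (d - 1) + 1 := by omega
    rw [this]; push_cast; ring
  have hdm1 : τ (a₁ + ((d - 1 : ℕ) : ZMod n)) ≠ τ a₁ := by
    rw [← h1, hv₁, ← hv₂]
    exact hA2'
  rcases Nat.lt_or_ge d 2 with hd2 | hd2
  · have : d - 1 = 0 := by omega
    rw [this] at hdm1
    simp at hdm1
  · have hP : τ (a₁ + ((d - 1 : ℕ) : ZMod n)) ≠ τ a₁ := hdm1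
    set P : ℕ → Prop := fun e => τ (a₁ + (e : ZMod n)) ≠ τ a₁ with hPdef
    have hex : ∃ e, P e := ⟨d - 1, hP⟩
    set e₀ := Nat.find hex with he₀def
    have hPe₀ : P e₀ := Nat.find_spec hex
    have he₀le : e₀ ≤ d - 1 := Nat.find_min' hex hP
    have he₀pos : 1 ≤ e₀ := by
      by_contra hcon
      have : e₀ = 0 := by omega
      rw [this] at hPe₀
      simp [hPdef] at hPe₀
    have hprev : τ (a₁ + ((e₀ - 1 : ℕ) : ZMod n)) = τ a₁ := by
      have := Nat.find_min hex (show e₀ - 1 < e₀ by omega)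
      simpa [hPdef] using this
    have hne : τ ((a₁ + (e₀ : ZMod n)) - 1) ≠ τ (a₁ + (e₀ : ZMod n)) := by
      have h1 : (a₁ + (e₀ : ZMod n)) - 1 = a₁ + ((e₀ - 1 : ℕ) : ZMod n) := by
        have : e₀ = (e₀ - 1) + 1 := by omega
        rw [this]; push_cast; ring_nf
      rw [h1, hprev]
      exact fun hcc => hPe₀ hcc.symm
    have hch := (changeLemma n r σ (a₁ + (e₀ : ZMod n)) hne).1
    have : σ (a₁ + (e₀ : ZMod n) + (r : ZMod n)) = σ s := by
      have h2 : a₁ + (e₀ : ZMod n) + (r : ZMod n) = a₁ + (r : ZMod n) + (e₀ : ZMod n) := by ring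
      rw [h2]; exact H1 e₀ (by omega)
    rw [hch, ← hv₁] at this
    exact hPe₀ this

/-- At the right end `j = a + L - 1` of a block of `maj n r σ`, the block value persists
at `j` and `σ (j - r)` equals it; also there is a change between `j` and `j+1`. -/
lemma end_facts (n r : ℕ) (σ : ZMod n → Bool) (a : ZMod n) (L : ℕ)
    (hb : IsBlock n (maj n r σ) a L) :
    maj n r σ (a + (L : ZMod n) - 1) = maj n r σ a ∧
      maj n r σ (a + (L : ZMod n)) ≠ maj n r σ (a + (L : ZMod n) - 1) ∧
      σ (a + (L : ZMod n) - 1 - (r : ZMod n)) = maj n r σ (a + (L : ZMod n) - 1) := by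
  set τ := maj n r σ with hτ
  have hL := hb.1
  have hj : a + (L : ZMod n) - 1 = a + ((L - 1 : ℕ) : ZMod n) := by
    have : L = (L - 1) + 1 := by omega
    rw [this]; push_cast; ring
  have h1 : τ (a + (L : ZMod n) - 1) = τ a := by
    rw [hj]; exact hb.2.2.1 _ (by omega)
  have h2 : τ (a + (L : ZMod n)) ≠ τ (a + (L : ZMod n) - 1) := by
    rw [h1]; exact hb.2.2.2.2
  refine ⟨h1, h2, ?_⟩
  have hi : (a + (L : ZMod n)) - 1 = a + (L : ZMod n) - 1 := by ring
  have hch := (changeLemma n r σ (a + (L : ZMod n)) (by rw [hi]; exact h2.symm)).2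
  have hi2 : a + (L : ZMod n) - (r : ZMod n) - 1 = a + (L : ZMod n) - 1 - (r : ZMod n) := by ring
  rw [hi2, hi] at hch
  exact hch

lemma left_core (n r : ℕ) (σ : ZMod n → Bool) (a₁ : ZMod n) (L₁ : ℕ) (a₂ : ZMod n) (L₂ : ℕ)
    (s : ZMod n) (M : ℕ)
    (hb₁ : IsBlock n (maj n r σ) a₁ L₁) (hb₂ : IsBlock n (maj n r σ) a₂ L₂)
    (hs : IsBlock n σ s M) (t₁ t₂ : ℕ) (ht₁ : t₁ < M) (ht₂ : t₂ < M)
    (he₁ : a₁ + (L₁ : ZMod n) - 1 - (r : ZMod n) = s + (t₁ : ZMod n))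
    (he₂ : a₂ + (L₂ : ZMod n) - 1 - (r : ZMod n) = s + (t₂ : ZMod n))
    (hle : t₁ ≤ t₂) : a₁ = a₂ := by
  have hom := hs.2.2.1
  obtain ⟨hq₁, hc₁, hσ₁⟩ := end_facts n r σ a₁ L₁ hb₁
  obtain ⟨hq₂, hc₂, hσ₂⟩ := end_facts n r σ a₂ L₂ hb₂
  obtain ⟨j₁, hj₁⟩ : ∃ j, a₁ + (L₁ : ZMod n) - 1 = j := ⟨_, rfl⟩
  obtain ⟨j₂, hj₂⟩ : ∃ j, a₂ + (L₂ : ZMod n) - 1 = j := ⟨_, rfl⟩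
  have hje₁ : j₁ - (r : ZMod n) = s + (t₁ : ZMod n) := by rw [← hj₁]; exact he₁
  have hje₂ : j₂ - (r : ZMod n) = s + (t₂ : ZMod n) := by rw [← hj₂]; exact he₂
  rw [hj₁] at hq₁ hc₁ hσ₁
  rw [hj₂] at hq₂ hc₂ hσ₂
  rw [hj₁] at he₁
  rw [hj₂] at he₂
  have hv₁ : maj n r σ j₁ = σ s := by rw [← hσ₁, he₁]; exact hom t₁ ht₁
  have hv₂ : maj n r σ j₂ = σ s := by rw [← hσ₂, he₂]; exact hom t₂ ht₂
  rcases eq_or_lt_of_le hle with heq | hlt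
  · subst heq
    have hj : j₁ = j₂ := by linear_combination he₁ - he₂
    have hend : a₁ + (L₁ : ZMod n) = a₂ + (L₂ : ZMod n) := by
      have h1 := hj₁
      have h2 := hj₂
      rw [← hj] at h2
      linear_combination h1 - h2
    exact same_end n (maj n r σ) a₁ L₁ a₂ L₂ hb₁ hb₂ hend
  exfalso
  set d := t₂ - t₁ with hd
  have hd1 : 1 ≤ d := by omega
  have hj₂₁ : j₂ = j₁ + (d : ZMod n) := by
    have hc : (t₂ : ZMod n) = (t₁ : ZMod n) + (d : ZMod n) := by
      have h : t₂ = t₁ + d := by omega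
      rw [h]; push_cast; ring
    rw [hc] at hje₂
    linear_combination hje₂ - hje₁
  have H1 : ∀ k : ℕ, k ≤ d → σ (j₁ - (r : ZMod n) + (k : ZMod n)) = σ s := by
    intro k hk
    have heq : j₁ - (r : ZMod n) + (k : ZMod n) = s + ((t₁ + k : ℕ) : ZMod n) := by
      push_cast
      linear_combination hje₁
    rw [heq]; exact hom _ (by omega)
  have hch1 : maj n r σ (j₁ + 1) ≠ maj n r σ j₁ := by
    have hh : j₁ + 1 = a₁ + (L₁ : ZMod n) := by rw [← hj₁]; ring
    rw [hh]; exact hc₁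
  rcases Nat.lt_or_ge d 2 with hd2 | hd2
  · have hdd : d = 1 := by omega
    have hh : j₂ = j₁ + 1 := by rw [hj₂₁, hdd]; push_cast; ring
    rw [hh] at hv₂
    exact hch1 (hv₂.trans hv₁.symm)
  · set P : ℕ → Prop := fun f => maj n r σ (j₁ + ((d - 1 - f : ℕ) : ZMod n)) ≠ maj n r σ j₁
      with hPdef
    have hP : P (d - 2) := by
      have h1 : d - 1 - (d - 2) = 1 := by omega
      simp only [hPdef, h1, Nat.cast_one]
      exact hch1
    have hex : ∃ f, P f := ⟨d - 2, hP⟩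
    set f₀ := Nat.find hex with hf₀def
    have hPf₀ : P f₀ := Nat.find_spec hex
    have hf₀le : f₀ ≤ d - 2 := Nat.find_min' hex hP
    set e := d - 1 - f₀ with he
    have he1 : 1 ≤ e := by omega
    have he2 : e ≤ d - 1 := by omega
    have hPe : maj n r σ (j₁ + (e : ZMod n)) ≠ maj n r σ j₁ := hPf₀
    have hnext : maj n r σ (j₁ + ((e + 1 : ℕ) : ZMod n)) = maj n r σ j₁ := by
      rcases Nat.eq_zero_or_pos f₀ with hf0 | hf0
      · have hh : e + 1 = d := by omega
        rw [hh, ← hj₂₁, hv₂, hv₁]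
      · have hmin := Nat.find_min hex (show f₀ - 1 < f₀ by omega)
        have hh : d - 1 - (f₀ - 1) = e + 1 := by omega
        rw [hPdef] at hmin
        simp only [hh] at hmin
        exact not_not.mp hmin
    have hne : maj n r σ ((j₁ + ((e + 1 : ℕ) : ZMod n)) - 1)
        ≠ maj n r σ (j₁ + ((e + 1 : ℕ) : ZMod n)) := by
      have hi : (j₁ + ((e + 1 : ℕ) : ZMod n)) - 1 = j₁ + (e : ZMod n) := by
        push_cast; ring
      rw [hi, hnext]
      exact hPe
    have hch := (changeLemma n r σ (j₁ + ((e + 1 : ℕ) : ZMod n)) hne).2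
    have hi : (j₁ + ((e + 1 : ℕ) : ZMod n)) - 1 = j₁ + (e : ZMod n) := by push_cast; ring
    have hi2 : (j₁ + ((e + 1 : ℕ) : ZMod n)) - (r : ZMod n) - 1
        = j₁ - (r : ZMod n) + (e : ZMod n) := by push_cast; ring
    rw [hi, hi2] at hch
    rw [H1 e (by omega), ← hv₁] at hch
    exact hPe hch.symm

/-- The right mapping (sending a block `[i,j]` of `σ'` to the block of `σ` containing `i+r`)
and the left mapping (sending `[i,j]` to the block of `σ` containing `j-r`) are injective. -/
theorem left_right_mappings_injective (n r : ℕ) (hr : 1 ≤ r)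
    (σ σ' : ZMod n → Bool) (h : maj n r σ = σ')
    (hσ : ∃ i : ZMod n, σ i ≠ σ (i + 1)) (hσ' : ∃ i : ZMod n, σ' i ≠ σ' (i + 1)) :
    (∀ (a₁ : ZMod n) (L₁ : ℕ) (a₂ : ZMod n) (L₂ : ℕ) (s₁ : ZMod n) (M₁ : ℕ)
        (s₂ : ZMod n) (M₂ : ℕ),
      IsBlock n σ' a₁ L₁ → IsBlock n σ' a₂ L₂ →
      IsBlock n σ s₁ M₁ → IsBlock n σ s₂ M₂ →
      InBlock n (a₁ + (r : ZMod n)) s₁ M₁ → InBlock n (a₂ + (r : ZMod n)) s₂ M₂ →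
      s₁ = s₂ → a₁ = a₂) ∧
    (∀ (a₁ : ZMod n) (L₁ : ℕ) (a₂ : ZMod n) (L₂ : ℕ) (s₁ : ZMod n) (M₁ : ℕ)
        (s₂ : ZMod n) (M₂ : ℕ),
      IsBlock n σ' a₁ L₁ → IsBlock n σ' a₂ L₂ →
      IsBlock n σ s₁ M₁ → IsBlock n σ s₂ M₂ →
      InBlock n (a₁ + (L₁ : ZMod n) - 1 - (r : ZMod n)) s₁ M₁ →
      InBlock n (a₂ + (L₂ : ZMod n) - 1 - (r : ZMod n)) s₂ M₂ →
      s₁ = s₂ → a₁ = a₂) := by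
  subst h
  set τ := maj n r σ with hτ
  constructor
  · intro a₁ L₁ a₂ L₂ s₁ M₁ s₂ M₂ hb₁ hb₂ hs₁ hs₂ hin₁ hin₂ hseq
    subst hseq
    have hM : M₁ = M₂ := same_start n σ s₁ M₁ M₂ hs₁ hs₂
    subst hM
    obtain ⟨t₁, ht₁, hg₁⟩ := hin₁
    obtain ⟨t₂, ht₂, hg₂⟩ := hin₂
    rcases le_total t₁ t₂ with hle | hle
    · exact right_core n r σ a₁ L₁ a₂ L₂ s₁ M₁ hb₁ hb₂ hs₁ t₁ t₂ ht₁ ht₂ hg₁ hg₂ hle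
    · exact (right_core n r σ a₂ L₂ a₁ L₁ s₁ M₁ hb₂ hb₁ hs₁ t₂ t₁ ht₂ ht₁ hg₂ hg₁ hle).symm
  · intro a₁ L₁ a₂ L₂ s₁ M₁ s₂ M₂ hb₁ hb₂ hs₁ hs₂ hin₁ hin₂ hseq
    subst hseq
    have hM : M₁ = M₂ := same_start n σ s₁ M₁ M₂ hs₁ hs₂
    subst hM
    obtain ⟨t₁, ht₁, hg₁⟩ := hin₁
    obtain ⟨t₂, ht₂, hg₂⟩ := hin₂
    rcases le_total t₁ t₂ with hle | hle
    · exact left_core n r σ a₁ L₁ a₂ L₂ s₁ M₁ hb₁ hb₂ hs₁ t₁ t₂ ht₁ ht₂ hg₁ hg₂ hle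
    · exact (left_core n r σ a₂ L₂ a₁ L₁ s₁ M₁ hb₂ hb₁ hs₁ t₂ t₁ ht₂ ht₁ hg₂ hg₁ hle).symm
end

section
/- For every pair of configurations σ, σ' with maj_r(σ) = σ', the number of maximal homogeneous blocks of σ' is at most the number of maximal homogeneous blocks of σ. -/
open Finset

/-!
At a switch `i` of `maj_r σ`, the window of `i + 1` loses the cell `i - r` and gains `i + r + 1`,
so `σ (i - r) = maj_r σ i`. Hence `ρ := maj_r σ (· + r)`, which has as many switches as
`maj_r σ`, agrees with `σ` at each of its own switches. Two consecutive switches `k, k'` of `ρ`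
carry different values of `ρ`, hence of `σ`, so `σ` switches somewhere in `[k, k')`; these
intervals are disjoint, which gives an injection from the switches of `ρ` into those of `σ`
(send `k` to the first switch of `σ` at or after `k`).
-/

def switches {G α : Type*} [AddMonoidWithOne G] [Fintype G] [DecidableEq α] (f : G → α) :
    Finset G :=
  univ.filter fun i => f i ≠ f (i + 1)

section Switches

variable {G α : Type*}

theorem apply_add_natCast_eq_of_forall_lt [AddMonoidWithOne G] {f : G → α} {a : G} {m : ℕ}
    (h : ∀ t < m, f (a + t) = f (a + t + 1)) : f (a + m) = f a := by
  induction m with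
  | zero => simp
  | succ m ih =>
    rw [Nat.cast_succ, ← add_assoc, ← h m m.lt_succ_self]
    exact ih fun t ht => h t (Nat.lt_succ_of_lt ht)

theorem exists_switch_of_ne [AddMonoidWithOne G] {f : G → α} {a : G} {m : ℕ}
    (h : f a ≠ f (a + m)) : ∃ t < m, f (a + t) ≠ f (a + t + 1) := by
  by_contra! hno
  exact h (apply_add_natCast_eq_of_forall_lt hno).symm

theorem eq_zero_of_switch_of_forall_le_eq [AddCommMonoidWithOne G] {f g : G → α}
    (hfg : ∀ i, g i ≠ g (i + 1) → f i = g i) {k : G} (hk : g k ≠ g (k + 1)) {t : ℕ}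
    (hf : ∀ s ≤ t, f (k + s) = f k) {d : ℕ} (hdt : d ≤ t) (hd : g (k + d) ≠ g (k + d + 1)) :
    d = 0 := by
  induction d using Nat.strong_induction_on with
  | _ d ih =>
    rcases d with _ | e
    · rfl
    · have hcast : k + 1 + (e : G) = k + ((e + 1 : ℕ) : G) := by push_cast; abel
      -- `g (k + d) = f (k + d) = f k = g k ≠ g (k + 1)`, so `g` switches somewhere closer to `k`
      have hne : g (k + 1) ≠ g (k + 1 + e) := by
        rw [hcast, ← hfg _ hd, hf _ hdt, hfg _ hk]
        exact hk.symm
      obtain ⟨e', he', hsw⟩ := exists_switch_of_ne hne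
      have hcast' : k + 1 + (e' : G) = k + ((e' + 1 : ℕ) : G) := by push_cast; abel
      rw [hcast'] at hsw
      exact absurd (ih (e' + 1) (by omega) (by omega) hsw) (by omega)

theorem card_switches_comp_add_right [AddCommGroupWithOne G] [Fintype G] [DecidableEq α]
    (f : G → α) (c : G) : #(switches fun i => f (i + c)) = #(switches f) := by
  refine card_nbij' (· + c) (· - c) ?_ ?_ (fun _ _ => by simp) (fun _ _ => by simp)
  · intro i hi
    simpa [switches, add_right_comm] using hi
  · intro i hi
    simpa [switches, sub_add_eq_add_sub] using hi

end Switches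

theorem card_switches_le_of_eq_on_switches {n : ℕ} [NeZero n] {α : Type*} [DecidableEq α]
    {f g : ZMod n → α} (hfg : ∀ i, g i ≠ g (i + 1) → f i = g i) :
    #(switches g) ≤ #(switches f) := by
  classical
  have hex (k : ZMod n) (hk : g k ≠ g (k + 1)) : ∃ t : ℕ, f (k + t) ≠ f (k + t + 1) := by
    by_contra! hno
    refine NeZero.ne n (eq_zero_of_switch_of_forall_le_eq hfg hk (t := n)
      (fun s _ => apply_add_natCast_eq_of_forall_lt fun t _ => hno t) le_rfl ?_)
    simpa using hk
  let first (k : ZMod n) : ℕ := if h : ∃ t : ℕ, f (k + t) ≠ f (k + t + 1) then Nat.find h else 0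
  have first_spec (k : ZMod n) (hk : g k ≠ g (k + 1)) :
      f (k + first k) ≠ f (k + first k + 1) ∧ ∀ s ≤ first k, f (k + s) = f k := by
    simp only [first, dif_pos (hex k hk)]
    exact ⟨Nat.find_spec (hex k hk), fun s hs => apply_add_natCast_eq_of_forall_lt
      fun t ht => not_not.1 (Nat.find_min (hex k hk) (by omega))⟩
  refine card_le_card_of_injOn (fun k => k + first k) (fun k hk => ?_) ?_
  · simp only [switches, coe_filter, Set.mem_ofPred_eq, mem_univ, true_and] at hk ⊢
    exact (first_spec k hk).1
  · intro k hk k' hk' heq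
    simp only [switches, coe_filter, Set.mem_ofPred_eq, mem_univ, true_and] at hk hk'
    wlog hle : first k' ≤ first k generalizing k k'
    · exact (this heq.symm hk' hk (by omega)).symm
    have hk'k : k' = k + ((first k - first k' : ℕ) : ZMod n) := by
      rw [Nat.cast_sub hle]
      linear_combination (-1 : ZMod n) * heq
    have hzero := eq_zero_of_switch_of_forall_le_eq hfg hk (first_spec k hk).2
      (Nat.sub_le _ _) (hk'k ▸ hk')
    rw [hk'k, hzero, Nat.cast_zero, add_zero]

theorem majCount_add_one (n r : ℕ) (σ : ZMod n → Bool) (i : ZMod n) :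
    majCount n r σ (i + 1) + (if σ (i - r) then 1 else 0) =
      majCount n r σ i + (if σ (i + r + 1) then 1 else 0) := by
  let x (s : ℕ) : ℕ := if σ (i - r + s) then 1 else 0
  have hi : majCount n r σ i = ∑ s ∈ range (2 * r + 1), x s := card_filter _ _
  have hi1 : majCount n r σ (i + 1) = ∑ s ∈ range (2 * r + 1), x (s + 1) := by
    refine (card_filter _ _).trans (sum_congr rfl fun s _ => ?_)
    simp only [x]
    congr 3
    push_cast
    ring
  have hx0 : x 0 = if σ (i - r) then 1 else 0 := by simp [x]
  have hxlast : x (2 * r + 1) = if σ (i + r + 1) then 1 else 0 := by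
    simp only [x]
    congr 3
    push_cast
    ring
  have := sum_range_succ x (2 * r + 1)
  have := sum_range_succ' x (2 * r + 1)
  omega

theorem apply_sub_eq_maj_of_maj_ne {n r : ℕ} {σ : ZMod n → Bool} {i : ZMod n}
    (h : maj n r σ i ≠ maj n r σ (i + 1)) : σ (i - r) = maj n r σ i := by
  have hcount := majCount_add_one n r σ i
  simp only [maj, ne_eq, decide_eq_decide] at h ⊢
  rcases Bool.eq_false_or_eq_true (σ (i - r)) with ha | ha <;>
    rcases Bool.eq_false_or_eq_true (σ (i + r + 1)) with hb | hb <;>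
    simp [ha, hb] at hcount ⊢ <;> omega

theorem number_of_blocks_nonincreasing_general (n r : ℕ) [NeZero n]
    (σ σ' : ZMod n → Bool) (h : maj n r σ = σ') :
    (Finset.univ.filter (fun i : ZMod n => σ' i ≠ σ' (i + 1))).card ≤
      (Finset.univ.filter (fun i : ZMod n => σ i ≠ σ (i + 1))).card := by
  subst h
  calc #(switches (maj n r σ)) = #(switches fun i => maj n r σ (i + (r : ZMod n))) :=
        (card_switches_comp_add_right _ _).symm
    _ ≤ #(switches σ) := card_switches_le_of_eq_on_switches fun i hi => by
        have := apply_sub_eq_maj_of_maj_ne (i := i + (r : ZMod n)) (by rwa [add_right_comm])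
        rwa [add_sub_cancel_right] at this

/-- Applying `maj_r` cannot increase the number of maximal homogeneous blocks
(equivalently, the number of switch points). -/
theorem number_of_blocks_nonincreasing (n r : ℕ) [NeZero n] (hr : 1 ≤ r)
    (σ σ' : ZMod n → Bool) (h : maj n r σ = σ') :
    (Finset.univ.filter (fun i : ZMod n => σ' i ≠ σ' (i + 1))).card ≤
      (Finset.univ.filter (fun i : ZMod n => σ i ≠ σ (i + 1))).card :=
  number_of_blocks_nonincreasing_general n r σ σ' h
end

section
/- Let σ, σ' satisfy maj_r(σ) = σ', let [i,j] be a maximal homogeneous block of σ', let I be the block of σ containing j−r and J the block of σ containing i+r. Then I and J have the same value as [i,j], and consequently the number of maximal homogeneous blocks of σ lying (cyclically) between I and J inclusive is odd. -/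
open Finset

lemma majCount_shift (n r : ℕ) [NeZero n] (σ : ZMod n → Bool) (x : ZMod n) :
    majCount n r σ (x + 1) + (if σ (x - (r : ZMod n)) then 1 else 0)
      = majCount n r σ x + (if σ (x + 1 + (r : ZMod n)) then 1 else 0) := by
  have key : ∀ y : ZMod n, majCount n r σ y
      = ∑ t ∈ Finset.range (2 * r + 1),
          (if σ (y - (r : ZMod n) + (t : ZMod n)) = true then 1 else 0) := by
    intro y; rw [majCount, Finset.card_filter]
  have h1 : ∑ t ∈ Finset.range (2 * r + 2),
      (if σ (x - (r : ZMod n) + (t : ZMod n)) = true then 1 else 0)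
      = majCount n r σ x + (if σ (x + 1 + (r : ZMod n)) then 1 else 0) := by
    rw [Finset.sum_range_succ, key]
    congr 2
    · push_cast; ring_nf
  have h2 : ∑ t ∈ Finset.range (2 * r + 2),
      (if σ (x - (r : ZMod n) + (t : ZMod n)) = true then 1 else 0)
      = majCount n r σ (x + 1) + (if σ (x - (r : ZMod n)) then 1 else 0) := by
    rw [Finset.sum_range_succ', key]
    congr 1
    · apply Finset.sum_congr rfl
      intro t _
      congr 2
      push_cast; ring
    · congr 2
      simp
  rw [← h2, h1]

/-- At a boundary of `maj`, the entering cell has the new value and the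
leaving cell has the old value. -/
lemma boundary (n r : ℕ) [NeZero n] (σ : ZMod n → Bool) (x : ZMod n)
    (hne : maj n r σ x ≠ maj n r σ (x + 1)) :
    σ (x + 1 + (r : ZMod n)) = maj n r σ (x + 1) ∧
      σ (x - (r : ZMod n)) = maj n r σ x := by
  have hs := majCount_shift n r σ x
  rcases hb : maj n r σ x with _ | _ <;> rcases hb' : maj n r σ (x + 1) with _ | _ <;>
      rw [hb, hb'] at hne <;> try simp at hne
  · -- maj x = false, maj (x+1) = true
    simp only [maj, decide_eq_false_iff_not, not_le, decide_eq_true_eq] at hb hb'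
    constructor
    · by_contra hc
      simp only [Bool.not_eq_true] at hc
      rw [hc] at hs
      rcases h0 : σ (x - (r : ZMod n)) <;> rw [h0] at hs <;> simp at hs <;> omega
    · by_contra hc
      simp only [Bool.not_eq_false] at hc
      rw [hc] at hs
      rcases h0 : σ (x + 1 + (r : ZMod n)) <;> rw [h0] at hs <;> simp at hs <;> omega
  · -- maj x = true, maj (x+1) = false
    simp only [maj, decide_eq_false_iff_not, not_le, decide_eq_true_eq] at hb hb'
    constructor
    · by_contra hc
      simp only [Bool.not_eq_false] at hc
      rw [hc] at hs
      rcases h0 : σ (x - (r : ZMod n)) <;> rw [h0] at hs <;> simp at hs <;> omega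
    · by_contra hc
      simp only [Bool.not_eq_true] at hc
      rw [hc] at hs
      rcases h0 : σ (x + 1 + (r : ZMod n)) <;> rw [h0] at hs <;> simp at hs <;> omega

lemma flip_parity (g : ℕ → Bool) (d : ℕ) :
    Even (((Finset.range d).filter (fun t => g t ≠ g (t + 1))).card) ↔ g 0 = g d := by
  induction d with
  | zero => simp
  | succ d ih =>
    rw [Finset.range_add_one, Finset.filter_insert]
    by_cases hd : g d ≠ g (d + 1)
    · rw [if_pos hd, Finset.card_insert_of_notMem (by simp)]
      rw [Nat.even_add_one, ih]
      rcases h0 : g 0 <;> rcases h1 : g d <;> rcases h2 : g (d + 1) <;>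
        simp_all
    · rw [if_neg hd, ih]
      simp only [ne_eq, not_not] at hd
      rw [hd]

/-- For a block `[i,j] = [a, a+L-1]` of `σ' = maj_r σ`, the block `I` of `σ` containing
`j-r` (starting at `s₁`) and the block `J` of `σ` containing `i+r` (starting at `s₂`)
both carry the value of `[i,j]`; consequently the number of blocks of `σ` from `I` to `J`
inclusive (which is `1` plus the number of switch points of `σ` in `[s₁, s₂-1]`) is odd. -/
theorem middle_block_well_defined (n r : ℕ) [NeZero n] (hr : 1 ≤ r)
    (σ σ' : ZMod n → Bool) (h : maj n r σ = σ')
    (hσ : ∃ i : ZMod n, σ i ≠ σ (i + 1)) (hσ' : ∃ i : ZMod n, σ' i ≠ σ' (i + 1))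
    (a : ZMod n) (L : ℕ) (hblk : IsBlock n σ' a L)
    (s₁ : ZMod n) (M₁ : ℕ) (hI : IsBlock n σ s₁ M₁)
    (hIin : InBlock n (a + (L : ZMod n) - 1 - (r : ZMod n)) s₁ M₁)
    (s₂ : ZMod n) (M₂ : ℕ) (hJ : IsBlock n σ s₂ M₂)
    (hJin : InBlock n (a + (r : ZMod n)) s₂ M₂) :
    σ s₁ = σ' a ∧ σ s₂ = σ' a ∧
      ∀ d : ℕ, d < n → s₂ = s₁ + (d : ZMod n) →
        Odd (1 + ((Finset.range d).filter
          (fun (t : ℕ) => σ (s₁ + (t : ZMod n)) ≠ σ (s₁ + (t : ZMod n) + 1))).card) := by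
  obtain ⟨hL, hLn, hhom, hleft, hright⟩ := hblk
  -- Step A: σ (a + r) = σ' a
  have ha1 : a - 1 + 1 = a := by ring
  have hA : σ (a + (r : ZMod n)) = σ' a := by
    have hne : maj n r σ (a - 1) ≠ maj n r σ (a - 1 + 1) := by
      rw [h, ha1]; exact fun hc => hleft hc
    have := (boundary n r σ (a - 1) hne).1
    rw [ha1] at this
    rw [this, h]
  -- Step B: σ (a + L - 1 - r) = σ' a
  set b : ZMod n := a + (L : ZMod n) - 1 with hb
  have hcastL : ((L - 1 : ℕ) : ZMod n) = (L : ZMod n) - 1 := by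
    have := Nat.cast_sub hL (R := ZMod n)
    simpa using this
  have hbval : σ' b = σ' a := by
    have := hhom (L - 1) (by omega)
    rw [hcastL] at this
    rw [hb]; rw [← this]; ring_nf
  have hb1 : b + 1 = a + (L : ZMod n) := by rw [hb]; ring
  have hB : σ (b - (r : ZMod n)) = σ' a := by
    have hne : maj n r σ b ≠ maj n r σ (b + 1) := by
      rw [h, hb1, hbval]
      exact fun hc => hright hc.symm
    have := (boundary n r σ b hne).2
    rw [this, h, hbval]
  -- σ s₁ = σ' a
  have hs1 : σ s₁ = σ' a := by
    obtain ⟨t, ht, he⟩ := hIin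
    have := hI.2.2.1 t ht
    rw [← he] at this
    rw [← this]
    convert hB using 2
  -- σ s₂ = σ' a
  have hs2 : σ s₂ = σ' a := by
    obtain ⟨t, ht, he⟩ := hJin
    have := hJ.2.2.1 t ht
    rw [← he] at this
    rw [← this, hA]
  refine ⟨hs1, hs2, ?_⟩
  intro d _ hd2
  set g : ℕ → Bool := fun t => σ (s₁ + (t : ZMod n)) with hg
  have hfe : (Finset.range d).filter
        (fun (t : ℕ) => σ (s₁ + (t : ZMod n)) ≠ σ (s₁ + (t : ZMod n) + 1))
      = (Finset.range d).filter (fun t => g t ≠ g (t + 1)) := by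
    apply Finset.filter_congr
    intro t _
    have hc : ((t + 1 : ℕ) : ZMod n) = (t : ZMod n) + 1 := by push_cast; ring
    simp only [hg, hc, add_assoc]
  have heven : Even (((Finset.range d).filter (fun t => g t ≠ g (t + 1))).card) := by
    rw [flip_parity]
    have h0 : g 0 = σ' a := by simp only [hg, Nat.cast_zero, add_zero]; exact hs1
    have hd' : g d = σ' a := by
      simp only [hg, ← hd2]; exact hs2
    rw [h0, hd']
  rw [hfe]
  obtain ⟨k, hk⟩ := heven
  exact ⟨k, by omega⟩
end

section
/- Define the potential φ(E_t, E_{t−1}) = Σ_i E_t(i)·g_{t−1}(i) − (r + 1/2)·Σ_i (E_t(i) + E_{t−1}(i)), where g_t(i) = Σ_{j=i−r}^{i+r} E_t(j) and E_{t+1} = maj_r(E_t). Then φ(E_{t+1}, E_t) − φ(E_t, E_{t−1}) = Σ_{i : E_{t+1}(i) ≠ E_{t−1}(i)} |g_t(i) − (r + 1/2)| ≥ (1/2)·|{i : E_{t+1}(i) ≠ E_{t−1}(i)}|. -/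
/-!
The symmetry `∑ A·g(B) = ∑ B·g(A)` of the neighbourhood sum turns the potential difference into
`∑ᵢ (E₂ i - E₀ i) (g₁(i) - (r + ½))`. Since `g₁(i)` is an integer, `E₂ i = 1` exactly when
`g₁(i) - (r + ½) > 0`, so each term is `|g₁(i) - (r + ½)| ≥ ½` when `E₂ i ≠ E₀ i` and `0` otherwise.
-/

open Finset

/-- The number of ones in the radius-`r` neighborhood of `i`, for integer-valued 0/1
configurations. -/
def gsum (n r : ℕ) [NeZero n] (E : ZMod n → ℚ) (i : ZMod n) : ℚ :=
  ∑ t ∈ Finset.range (2 * r + 1), E (i - (r : ZMod n) + (t : ZMod n))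

/-- The Goles–Olivos potential function. -/
def pot (n r : ℕ) [NeZero n] (A B : ZMod n → ℚ) : ℚ :=
  (∑ i : ZMod n, A i * gsum n r B i) -
    ((r : ℚ) + 1 / 2) * ∑ i : ZMod n, (A i + B i)

section Threshold

variable {α : Type*} [Field α] [LinearOrder α] [IsStrictOrderedRing α]

lemma sub_mul_eq_ite_abs {e₀ e₂ x : α} (h₀ : e₀ = 0 ∨ e₀ = 1)
    (h₂ : e₂ = if 0 < x then 1 else 0) :
    (e₂ - e₀) * x = if e₂ ≠ e₀ then |x| else 0 := by
  split_ifs at h₂ with hx <;> rcases h₀ with rfl | rfl <;> subst h₂ <;>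
    simp [abs_of_pos, abs_of_nonpos, not_lt.mp, *]

lemma half_le_abs_intCast_sub_add_half (m c : ℤ) : (1 / 2 : α) ≤ |(m : α) - (c + 1 / 2)| := by
  rcases le_or_gt m c with h | h
  · have : (m : α) ≤ c := by exact_mod_cast h
    rw [abs_of_neg (by linarith)]
    linarith
  · have : (c : α) + 1 ≤ m := by exact_mod_cast h
    rw [abs_of_pos (by linarith)]
    linarith

lemma add_one_le_intCast_iff_pos_sub_add_half (m c : ℤ) :
    (c : α) + 1 ≤ m ↔ 0 < (m : α) - (c + 1 / 2) := by
  constructor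
  · intro h
    linarith
  · intro h
    have : c < m := by exact_mod_cast (show (c : α) < m by linarith)
    exact_mod_cast Int.add_one_le_iff.mpr this

end Threshold

section Potential

variable (n r : ℕ) [NeZero n]

lemma sum_mul_gsum_comm (A B : ZMod n → ℚ) :
    ∑ i, A i * gsum n r B i = ∑ i, B i * gsum n r A i := by
  simp only [gsum, mul_sum]
  rw [sum_comm, sum_comm (s := univ), ← sum_range_reflect]
  refine sum_congr rfl fun t ht => ?_
  have ht : t ≤ 2 * r := Nat.lt_succ_iff.mp (mem_range.mp ht)
  -- the shift `i ↦ i + (r - t)` matches offset `t` on the left with offset `2r - t` on the right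
  refine Fintype.sum_equiv (Equiv.addRight ((r : ZMod n) - t)) _ _ fun i => ?_
  rw [Equiv.coe_addRight, mul_comm, Nat.add_sub_cancel, Nat.cast_sub ht]
  push_cast
  ring_nf

lemma exists_gsum_eq_intCast {E : ZMod n → ℚ} (h : ∀ i, ∃ m : ℤ, E i = m) (i : ZMod n) :
    ∃ m : ℤ, gsum n r E i = m := by
  choose f hf using h
  exact ⟨∑ t ∈ range (2 * r + 1), f (i - r + t), by simp [gsum, hf]⟩

lemma pot_sub_pot (E₀ E₁ E₂ : ZMod n → ℚ) :
    pot n r E₂ E₁ - pot n r E₁ E₀ =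
      ∑ i, (E₂ i - E₀ i) * (gsum n r E₁ i - ((r : ℚ) + 1 / 2)) := by
  rw [pot, pot, sum_mul_gsum_comm n r E₁ E₀]
  simp only [mul_sum, ← sum_sub_distrib]
  exact sum_congr rfl fun i _ => by ring

end Potential

theorem potential_increase_general (n r : ℕ) [NeZero n]
    (E₀ E₁ E₂ : ZMod n → ℚ)
    (h₀ : ∀ i, E₀ i = 0 ∨ E₀ i = 1) (h₁ : ∀ i, E₁ i = 0 ∨ E₁ i = 1)
    (h₂ : ∀ i, E₂ i = if ((r : ℚ) + 1 ≤ gsum n r E₁ i) then 1 else 0) :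
    pot n r E₂ E₁ - pot n r E₁ E₀ =
      (∑ i ∈ Finset.univ.filter (fun i : ZMod n => E₂ i ≠ E₀ i),
        |gsum n r E₁ i - ((r : ℚ) + 1 / 2)|) ∧
    (1 / 2 : ℚ) * (Finset.univ.filter (fun i : ZMod n => E₂ i ≠ E₀ i)).card ≤
      ∑ i ∈ Finset.univ.filter (fun i : ZMod n => E₂ i ≠ E₀ i),
        |gsum n r E₁ i - ((r : ℚ) + 1 / 2)| := by
  have hint : ∀ i, ∃ m : ℤ, gsum n r E₁ i = m :=
    exists_gsum_eq_intCast n r fun i =>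
      (h₁ i).elim (fun h => ⟨0, by simp [h]⟩) fun h => ⟨1, by simp [h]⟩
  have hE₂ : ∀ i, E₂ i = if 0 < gsum n r E₁ i - ((r : ℚ) + 1 / 2) then 1 else 0 := fun i => by
    obtain ⟨m, hm⟩ := hint i
    rw [h₂, hm]
    exact if_congr (by exact_mod_cast add_one_le_intCast_iff_pos_sub_add_half (α := ℚ) m r) rfl rfl
  have hhalf : ∀ i, (1 / 2 : ℚ) ≤ |gsum n r E₁ i - ((r : ℚ) + 1 / 2)| := fun i => by
    obtain ⟨m, hm⟩ := hint i
    rw [hm]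
    exact_mod_cast half_le_abs_intCast_sub_add_half (α := ℚ) m r
  refine ⟨?_, ?_⟩
  · rw [pot_sub_pot, sum_filter]
    exact sum_congr rfl fun i _ => sub_mul_eq_ite_abs (h₀ i) (hE₂ i)
  · rw [mul_comm, ← nsmul_eq_mul]
    exact card_nsmul_le_sum _ _ _ fun i _ => hhalf i

/-- One-step increase of the potential:
`φ(E₂, E₁) - φ(E₁, E₀) = ∑_{i : E₂ i ≠ E₀ i} |g₁(i) - (r + 1/2)| ≥ (1/2)·#{i : E₂ i ≠ E₀ i}`,
where `E₂ = maj_r E₁`. -/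
theorem potential_increase (n r : ℕ) [NeZero n] (hr : 1 ≤ r)
    (E₀ E₁ E₂ : ZMod n → ℚ)
    (h₀ : ∀ i, E₀ i = 0 ∨ E₀ i = 1) (h₁ : ∀ i, E₁ i = 0 ∨ E₁ i = 1)
    (h₂ : ∀ i, E₂ i = if ((r : ℚ) + 1 ≤ gsum n r E₁ i) then 1 else 0) :
    pot n r E₂ E₁ - pot n r E₁ E₀ =
      (∑ i ∈ Finset.univ.filter (fun i : ZMod n => E₂ i ≠ E₀ i),
        |gsum n r E₁ i - ((r : ℚ) + 1 / 2)|) ∧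
    (1 / 2 : ℚ) * (Finset.univ.filter (fun i : ZMod n => E₂ i ≠ E₀ i)).card ≤
      ∑ i ∈ Finset.univ.filter (fun i : ZMod n => E₂ i ≠ E₀ i),
        |gsum n r E₁ i - ((r : ℚ) + 1 / 2)| :=
  potential_increase_general n r E₀ E₁ E₂ h₀ h₁ h₂
end

section
/- Let v, v' : ZMod k → ℕ be block-length vectors of an aligned temporally periodic pair of weakly stable configurations with common horizon δ, satisfying v'_i = Σ_{j=−δ}^{δ} (−1)^{j+δ} v_{i+j} and v_i = Σ_{j=−δ}^{δ} (−1)^{j+δ} v'_{i+j} for all i. Define Δ_i = v'_{i+δ+1} − v_i and Δ'_i = v_{i+δ+1} − v'_i (as integers). Then Δ'_i = Δ_{i−δ} and Δ_i = Δ'_{i−δ} for all i, and consequently Δ_{i+2δ} = Δ_i and Δ'_{i+2δ} = Δ'_i, i.e., both difference vectors are periodic with period dividing 2δ. -/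
open Finset

lemma key_sum_rel (k δ : ℕ) [NeZero k] (w w' : ZMod k → ℕ)
    (h : ∀ i : ZMod k, (w' i : ℤ) =
      ∑ t ∈ Finset.range (2 * δ + 1), (-1 : ℤ) ^ t * (w (i + (t : ZMod k) - (δ : ZMod k)) : ℤ)) :
    ∀ i : ZMod k, (w' i : ℤ) + (w' (i + 1) : ℤ) =
      (w (i - (δ : ZMod k)) : ℤ) + (w (i + (δ : ZMod k) + 1) : ℤ) := by
  intro i
  set f : ℕ → ℤ := fun t => (-1 : ℤ) ^ t * (w (i + (t : ZMod k) - (δ : ZMod k)) : ℤ) with hf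
  have hA : (w' i : ℤ) = ∑ t ∈ Finset.range (2 * δ + 1), f t := h i
  have hB : (w' (i + 1) : ℤ) = -∑ t ∈ Finset.range (2 * δ + 1), f (t + 1) := by
    rw [h (i + 1), ← Finset.sum_neg_distrib]
    refine Finset.sum_congr rfl fun t _ => ?_
    have harg : i + 1 + (t : ZMod k) - (δ : ZMod k)
        = i + ((t + 1 : ℕ) : ZMod k) - (δ : ZMod k) := by push_cast; ring
    rw [harg]
    simp [hf, pow_succ]
  have e1 : ∑ t ∈ Finset.range (2 * δ + 2), f t
      = f 0 + ∑ t ∈ Finset.range (2 * δ + 1), f (t + 1) := by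
    rw [Finset.sum_range_succ' f (2 * δ + 1)]; ring
  have e2 : ∑ t ∈ Finset.range (2 * δ + 2), f t
      = (∑ t ∈ Finset.range (2 * δ + 1), f t) + f (2 * δ + 1) := Finset.sum_range_succ f (2 * δ + 1)
  have hf0 : f 0 = (w (i - (δ : ZMod k)) : ℤ) := by simp [hf]
  have hflast : f (2 * δ + 1) = -(w (i + (δ : ZMod k) + 1) : ℤ) := by
    have harg : i + ((2 * δ + 1 : ℕ) : ZMod k) - (δ : ZMod k) = i + (δ : ZMod k) + 1 := by
      push_cast; ring
    have hpow : (-1 : ℤ) ^ (2 * δ + 1) = -1 := Odd.neg_one_pow ⟨δ, by ring⟩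
    simp only [hf]
    rw [harg, hpow]; ring
  have : (w' i : ℤ) + (w' (i + 1) : ℤ) = f 0 - f (2 * δ + 1) := by
    rw [hA, hB]; linarith [e1, e2]
  rw [this, hf0, hflast]; ring

/-- The `(δ+1)`-step difference vectors of a pair of block-length vectors of an aligned
temporally periodic pair are spatially periodic with period dividing `2δ`. -/
theorem difference_vectors_periodic (k δ : ℕ) [NeZero k] (hδ : 1 ≤ δ)
    (v v' : ZMod k → ℕ)
    (hvv' : ∀ i : ZMod k, (v' i : ℤ) =
      ∑ t ∈ Finset.range (2 * δ + 1), (-1 : ℤ) ^ t * (v (i + (t : ZMod k) - (δ : ZMod k)) : ℤ))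
    (hv'v : ∀ i : ZMod k, (v i : ℤ) =
      ∑ t ∈ Finset.range (2 * δ + 1), (-1 : ℤ) ^ t * (v' (i + (t : ZMod k) - (δ : ZMod k)) : ℤ)) :
    (∀ i : ZMod k,
        ((v (i + (δ : ZMod k) + 1) : ℤ) - (v' i : ℤ)) =
          ((v' (i - (δ : ZMod k) + (δ : ZMod k) + 1) : ℤ) - (v (i - (δ : ZMod k)) : ℤ))) ∧
    (∀ i : ZMod k,
        ((v' (i + (δ : ZMod k) + 1) : ℤ) - (v i : ℤ)) =
          ((v (i - (δ : ZMod k) + (δ : ZMod k) + 1) : ℤ) - (v' (i - (δ : ZMod k)) : ℤ))) ∧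
    (∀ i : ZMod k,
        ((v' (i + (2 * δ : ℕ) + (δ : ZMod k) + 1) : ℤ) - (v (i + (2 * δ : ℕ)) : ℤ)) =
          ((v' (i + (δ : ZMod k) + 1) : ℤ) - (v i : ℤ))) ∧
    (∀ i : ZMod k,
        ((v (i + (2 * δ : ℕ) + (δ : ZMod k) + 1) : ℤ) - (v' (i + (2 * δ : ℕ)) : ℤ)) =
          ((v (i + (δ : ZMod k) + 1) : ℤ) - (v' i : ℤ))) := by
  have K1 := key_sum_rel k δ v v' hvv'
  have K2 := key_sum_rel k δ v' v hv'v
  have hsub : ∀ i : ZMod k, i - (δ : ZMod k) + (δ : ZMod k) + 1 = i + 1 := fun i => by ring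
  -- goal 1
  have g1 : ∀ i : ZMod k,
      ((v (i + (δ : ZMod k) + 1) : ℤ) - (v' i : ℤ)) =
        ((v' (i - (δ : ZMod k) + (δ : ZMod k) + 1) : ℤ) - (v (i - (δ : ZMod k)) : ℤ)) := by
    intro i
    rw [hsub]
    linarith [K1 i]
  have g2 : ∀ i : ZMod k,
      ((v' (i + (δ : ZMod k) + 1) : ℤ) - (v i : ℤ)) =
        ((v (i - (δ : ZMod k) + (δ : ZMod k) + 1) : ℤ) - (v' (i - (δ : ZMod k)) : ℤ)) := by
    intro i
    rw [hsub]
    linarith [K2 i]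
  refine ⟨g1, g2, ?_, ?_⟩
  · intro i
    have h1 := g2 (i + (2 * δ : ℕ))
    have h2 := g1 (i + (δ : ZMod k))
    have e1 : i + ((2 * δ : ℕ) : ZMod k) - (δ : ZMod k) = i + (δ : ZMod k) := by push_cast; ring
    have e2 : i + (δ : ZMod k) - (δ : ZMod k) = i := by ring
    rw [hsub, e1] at h1
    rw [hsub, e2] at h2
    -- h1 : v' (i+2δ+δ+1) - v (i+2δ) = v (i+δ+1) - v' (i+δ)
    have e3 : i + (δ : ZMod k) + (δ : ZMod k) + 1 = i + ((2 * δ : ℕ) : ZMod k) + 1 := by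
      push_cast; ring
    rw [e3] at h2
    have e4 : i + ((2 * δ : ℕ) : ZMod k) + 1 = i + ((2 * δ : ℕ) : ZMod k) + 1 := rfl
    linarith [h1, h2]
  · intro i
    have h1 := g1 (i + (2 * δ : ℕ))
    have h2 := g2 (i + (δ : ZMod k))
    have e1 : i + ((2 * δ : ℕ) : ZMod k) - (δ : ZMod k) = i + (δ : ZMod k) := by push_cast; ring
    have e2 : i + (δ : ZMod k) - (δ : ZMod k) = i := by ring
    rw [hsub, e1] at h1
    rw [hsub, e2] at h2
    have e3 : i + (δ : ZMod k) + (δ : ZMod k) + 1 = i + ((2 * δ : ℕ) : ZMod k) + 1 := by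
      push_cast; ring
    rw [e3] at h2
    linarith [h1, h2]
end

section
/- Let v, v' : ZMod k → ℤ be cyclic sequences satisfying v'_i = Σ_{j=−δ}^{δ} (−1)^{j+δ} v_{i+j} and v_i = Σ_{j=−δ}^{δ} (−1)^{j+δ} v'_{i+j} for all i ∈ ZMod k, where δ ≥ 1, and suppose the values of v are bounded. Then v is spatially periodic with period dividing 2δ(δ+1): v_{i+2δ(δ+1)} = v_i for all i. -/
open Finset

lemma tele_aux {k : ℕ} (f : ZMod k → ℤ) :
    ∀ (n : ℕ) (i : ZMod k),
      (∑ t ∈ Finset.range (n+1), (-1:ℤ)^t * f (i + (t:ZMod k))) +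
      (∑ t ∈ Finset.range (n+1), (-1:ℤ)^t * f (i + 1 + (t:ZMod k))) =
      f i + (-1:ℤ)^n * f (i + (n:ZMod k) + 1) := by
  intro n
  induction n with
  | zero => intro i; norm_num
  | succ n ih =>
    intro i
    rw [Finset.sum_range_succ (fun t => (-1:ℤ)^t * f (i + (t:ZMod k))) (n+1),
        Finset.sum_range_succ (fun t => (-1:ℤ)^t * f (i + 1 + (t:ZMod k))) (n+1)]
    have h1 : ((n+1:ℕ):ZMod k) = (n:ZMod k) + 1 := by push_cast; ring
    rw [h1]
    have ha : i + ((n:ZMod k) + 1) = i + (n:ZMod k) + 1 := by ring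
    have hb : i + 1 + ((n:ZMod k) + 1) = i + (n:ZMod k) + 1 + 1 := by ring
    rw [ha, hb]
    linear_combination ih i


/-- A pair of bounded cyclic integer sequences related by the alternating-sum relations of
horizon `δ` is spatially periodic with period dividing `2δ(δ+1)`. -/
theorem block_length_vector_spatially_periodic (k δ : ℕ) [NeZero k] (hδ : 1 ≤ δ)
    (v v' : ZMod k → ℤ)
    (hvv' : ∀ i : ZMod k, v' i =
      ∑ t ∈ Finset.range (2 * δ + 1), (-1 : ℤ) ^ t * v (i + (t : ZMod k) - (δ : ZMod k)))
    (hv'v : ∀ i : ZMod k, v i =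
      ∑ t ∈ Finset.range (2 * δ + 1), (-1 : ℤ) ^ t * v' (i + (t : ZMod k) - (δ : ZMod k)))
    (hbdd : ∃ C : ℤ, ∀ i : ZMod k, |v i| ≤ C) :
    ∀ i : ZMod k, v (i + ((2 * δ * (δ + 1) : ℕ) : ZMod k)) = v i := by
  set d : ZMod k := (δ : ZMod k) with hd
  -- key telescoped relations
  have key1 : ∀ i : ZMod k, v' i + v' (i + 1) = v (i - d) + v (i + d + 1) := by
    intro i
    have := tele_aux (fun j => v (j - d)) (2 * δ) i
    rw [hvv' i, hvv' (i + 1)]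
    have he : (-1:ℤ)^(2*δ) = 1 := by
      rw [pow_mul]; norm_num
    rw [he, one_mul] at this
    have harg : i + ((2*δ : ℕ) : ZMod k) + 1 - d = i + d + 1 := by
      push_cast [hd]; ring
    rw [harg] at this
    exact this
  have key2 : ∀ i : ZMod k, v i + v (i + 1) = v' (i - d) + v' (i + d + 1) := by
    intro i
    have := tele_aux (fun j => v' (j - d)) (2 * δ) i
    rw [hv'v i, hv'v (i + 1)]
    have he : (-1:ℤ)^(2*δ) = 1 := by
      rw [pow_mul]; norm_num
    rw [he, one_mul] at this
    have harg : i + ((2*δ : ℕ) : ZMod k) + 1 - d = i + d + 1 := by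
      push_cast [hd]; ring
    rw [harg] at this
    exact this
  set D : ZMod k → ℤ := fun i => v' (i + d + 1) - v i with hD
  set D' : ZMod k → ℤ := fun i => v (i + d + 1) - v' i with hD'
  have hD1 : ∀ i : ZMod k, D i = v (i + 1) - v' (i - d) := by
    intro i; have := key2 i; simp only [hD]; linarith
  have hD'1 : ∀ i : ZMod k, D' i = v' (i + 1) - v (i - d) := by
    intro i; have := key1 i; simp only [hD']; linarith
  -- D' i = D (i - d)
  have hA : ∀ i : ZMod k, D' i = D (i - d) := by
    intro i
    rw [hD'1 i]
    have : i - d + d + 1 = i + 1 := by ring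
    simp only [hD, this]
  -- D i = D' (i - d)
  have hB : ∀ i : ZMod k, D i = D' (i - d) := by
    intro i
    rw [hD1 i]
    have : i - d + d + 1 = i + 1 := by ring
    simp only [hD', this]
  have hper : ∀ i : ZMod k, D (i + 2 * d) = D i := by
    intro i
    rw [hB (i + 2 * d)]
    have h1 : i + 2 * d - d = i + d := by ring
    rw [h1, hA (i + d)]
    congr 1; ring
  have hF1 : ∀ i : ZMod k, v' (i + d + 1) = v i + D i := by
    intro i; simp [hD]
  have hF2 : ∀ i : ZMod k, v (i + d + 1) = v' i + D' i := by
    intro i; simp [hD']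
  have hstep : ∀ i : ZMod k, v (i + 2 * d + 2) = v i + D i + D (i + 1) := by
    intro i
    have h1 : i + 2 * d + 2 = (i + d + 1) + d + 1 := by ring
    rw [h1, hF2 (i + d + 1), hF1 i, hA (i + d + 1)]
    have h2 : i + d + 1 - d = i + 1 := by ring
    rw [h2]
  -- iteration
  have hiter : ∀ (n : ℕ) (i : ZMod k),
      v (i + ((n * (2 * δ + 2) : ℕ) : ZMod k)) = v i + ∑ t ∈ Finset.range (2 * n), D (i + (t : ZMod k)) := by
    intro n
    induction n with
    | zero => intro i; simp
    | succ n ih =>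
      intro i
      have hc : (((n+1) * (2 * δ + 2) : ℕ) : ZMod k) = (2 * d + 2) + ((n * (2 * δ + 2) : ℕ) : ZMod k) := by
        push_cast [hd]; ring
      have h1 : i + (((n+1) * (2 * δ + 2) : ℕ) : ZMod k) = (i + 2 * d + 2) + ((n * (2 * δ + 2) : ℕ) : ZMod k) := by
        rw [hc]; ring
      rw [h1, ih (i + 2 * d + 2), hstep i]
      have h2 : ∀ t : ℕ, i + 2 * d + 2 + (t : ZMod k) = (i + ((t+2 : ℕ) : ZMod k)) + 2 * d := by
        intro t; push_cast; ring
      have h3 : ∑ t ∈ Finset.range (2 * n), D (i + 2 * d + 2 + (t : ZMod k))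
          = ∑ t ∈ Finset.range (2 * n), D (i + ((t+2 : ℕ) : ZMod k)) := by
        refine Finset.sum_congr rfl fun t _ => ?_
        rw [h2 t, hper]
      rw [h3]
      have e1 : ∑ t ∈ Finset.range (2*n+1+1), D (i + (t : ZMod k))
          = ∑ t ∈ Finset.range (2*n+1), D (i + ((t+1 : ℕ) : ZMod k)) + D (i + ((0:ℕ) : ZMod k)) :=
        Finset.sum_range_succ' _ _
      have e2 : ∑ t ∈ Finset.range (2*n+1), D (i + ((t+1 : ℕ) : ZMod k))
          = ∑ t ∈ Finset.range (2*n), D (i + ((t+1+1 : ℕ) : ZMod k)) + D (i + ((0+1 : ℕ) : ZMod k)) :=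
        Finset.sum_range_succ' _ _
      have e3 : ∑ t ∈ Finset.range (2*n), D (i + ((t+1+1 : ℕ) : ZMod k))
          = ∑ t ∈ Finset.range (2*n), D (i + ((t+2 : ℕ) : ZMod k)) := by
        refine Finset.sum_congr rfl fun t _ => ?_
        congr 1
      have h4 : 2 * (n + 1) = 2 * n + 1 + 1 := by ring
      rw [h4, e1, e2, e3]
      norm_num
      ring
  -- the increment function
  set S : ZMod k → ℤ := fun i => ∑ t ∈ Finset.range (2 * δ), D (i + (t : ZMod k)) with hS
  set P : ZMod k := ((2 * δ * (δ + 1) : ℕ) : ZMod k) with hP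
  have hvP : ∀ i : ZMod k, v (i + P) = v i + S i := by
    intro i
    have hn : 2 * δ * (δ + 1) = δ * (2 * δ + 2) := by ring
    rw [hP, hn]
    exact hiter δ i
  have hS1 : ∀ i : ZMod k, S (i + 1) = S i := by
    intro i
    have a1 := Finset.sum_range_succ (fun t : ℕ => D (i + (t : ZMod k))) (2 * δ)
    have a2 := Finset.sum_range_succ' (fun t : ℕ => D (i + (t : ZMod k))) (2 * δ)
    have b1 : D (i + ((2 * δ : ℕ) : ZMod k)) = D i := by
      have : i + ((2 * δ : ℕ) : ZMod k) = i + 2 * d := by push_cast [hd]; ring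
      rw [this, hper]
    have b2 : D (i + ((0 : ℕ) : ZMod k)) = D i := by norm_num
    have b3 : ∑ t ∈ Finset.range (2 * δ), D (i + ((t + 1 : ℕ) : ZMod k))
        = ∑ t ∈ Finset.range (2 * δ), D ((i + 1) + (t : ZMod k)) := by
      refine Finset.sum_congr rfl fun t _ => ?_
      congr 1
      push_cast
      ring
    rw [b1] at a1
    rw [b2, b3] at a2
    simp only [hS]
    linarith
  have hSn : ∀ n : ℕ, S ((n : ZMod k)) = S 0 := by
    intro n
    induction n with
    | zero => norm_num
    | succ n ih =>
      have : ((n + 1 : ℕ) : ZMod k) = ((n : ℕ) : ZMod k) + 1 := by push_cast; ring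
      rw [this, hS1, ih]
  have hSconst : ∀ i : ZMod k, S i = S 0 := by
    intro i
    obtain ⟨n, rfl⟩ := ZMod.natCast_zmod_surjective (n := k) i
    exact hSn n
  have hsum : ∑ i : ZMod k, v (i + P) = ∑ i : ZMod k, v i :=
    Fintype.sum_equiv (Equiv.addRight P) _ _ (fun i => rfl)
  have hzero : (k : ℤ) * S 0 = 0 := by
    have : ∑ i : ZMod k, (v (i + P) - v i) = 0 := by
      rw [Finset.sum_sub_distrib, hsum, sub_self]
    calc (k : ℤ) * S 0 = ∑ _i : ZMod k, S 0 := by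
          rw [Finset.sum_const, Finset.card_univ, ZMod.card k, nsmul_eq_mul]
      _ = ∑ i : ZMod k, (v (i + P) - v i) := by
          refine Finset.sum_congr rfl fun i _ => ?_
          rw [hvP i, ← hSconst i]; ring
      _ = 0 := this
  have hS0 : S 0 = 0 := by
    have hk : (k : ℤ) ≠ 0 := by exact_mod_cast (NeZero.ne k)
    exact (mul_eq_zero.mp hzero).resolve_left hk
  intro i
  rw [hvP i, hSconst i, hS0, add_zero]
end
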